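/- arXiv:1210.8401 — 5 statements merged into one kernel-verified Lean document; each statement's English description precedes it below -/
import Mathlib

section
/- Let Ω ⊂ ℝⁿ be a bounded open set, s ∈ (0,1), and let u : ℝⁿ → ℝ be a measurable function with u = 0 a.e. on ℝⁿ \ Ω and u ∈ L²(Ω). If Ω ⊆ B_R (the ball of radius R centered at the origin) and |B_R \ Ω| > 0, then ∫∫_{Q} |u(x)-u(y)|² / |x-y|^{n+2s} dx dy ≥ (|B_R \ Ω| / (2R)^{n+2s}) · ‖u‖²_{L²(Ω)}, where Q = ℝ²ⁿ \ ((ℝⁿ\Ω) × (ℝⁿ\Ω)). -/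
open MeasureTheory ENNReal

/-!
Only the part `(B_R \ Ω) × Ω` of the cross-region is used. For `x ∈ B_R \ Ω` we have `u x = 0`
for almost every such `x`, so the integrand there is `u(y)² / |x - y|^(n+2s)`, and
`0 < |x - y| < 2R` bounds it below by `u(y)² / (2R)^(n+2s)`; Tonelli then integrates this
bound over `y ∈ Ω` and `x ∈ B_R \ Ω`.
-/

theorem mul_setLIntegral_le_setLIntegral_prod {α β : Type*} [MeasurableSpace α]
    [MeasurableSpace β] {μ : Measure α} {ν : Measure β} [SFinite μ] [SFinite ν]
    {f : α × β → ℝ≥0∞} (hf : Measurable f) {g : β → ℝ≥0∞} {A : Set α} {B : Set β}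
    (hB : MeasurableSet B) (hgf : ∀ᵐ x ∂μ.restrict A, ∀ y ∈ B, g y ≤ f (x, y)) :
    μ A * ∫⁻ y in B, g y ∂ν ≤ ∫⁻ z in A ×ˢ B, f z ∂μ.prod ν := by
  rw [setLIntegral_prod f hf.aemeasurable, mul_comm, ← setLIntegral_const]
  exact lintegral_mono_ae (hgf.mono fun x hx => setLIntegral_mono_ae' hB (.of_forall hx))

theorem ofReal_div_rpow_le_ofReal_div_rpow {a d D p : ℝ} (ha : 0 ≤ a) (hd : 0 < d)
    (hdD : d ≤ D) (hp : 0 ≤ p) :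
    ENNReal.ofReal a / ENNReal.ofReal (D ^ p) ≤ ENNReal.ofReal (a / d ^ p) := by
  rw [← ENNReal.ofReal_div_of_pos (Real.rpow_pos_of_pos (hd.trans_le hdD) p)]
  exact ENNReal.ofReal_le_ofReal <| div_le_div_of_nonneg_left ha (Real.rpow_pos_of_pos hd p)
    (Real.rpow_le_rpow hd.le hdD hp)

theorem measure_div_rpow_mul_lintegral_sq_le_lintegral_prod {X : Type*} [MetricSpace X]
    [SecondCountableTopology X] [MeasurableSpace X] [BorelSpace X] {μ : Measure X} [SFinite μ]
    {u : X → ℝ} (hu : Measurable u) {A Ω : Set X} (hA : MeasurableSet A) (hΩ : MeasurableSet Ω)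
    (hAΩ : Disjoint A Ω) {D p : ℝ} (hD : ∀ x ∈ A, ∀ y ∈ Ω, dist x y ≤ D) (hp : 0 ≤ p)
    (hu0 : ∀ᵐ x ∂μ, x ∈ A → u x = 0) :
    μ A / ENNReal.ofReal (D ^ p) * ∫⁻ y in Ω, ENNReal.ofReal (u y ^ 2) ∂μ ≤
      ∫⁻ z in A ×ˢ Ω, ENNReal.ofReal ((u z.1 - u z.2) ^ 2 / dist z.1 z.2 ^ p) ∂μ.prod μ := by
  have hf : Measurable fun z : X × X =>
      ENNReal.ofReal ((u z.1 - u z.2) ^ 2 / dist z.1 z.2 ^ p) := by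
    fun_prop
  have hbound : ∀ᵐ x ∂μ.restrict A, ∀ y ∈ Ω,
      ENNReal.ofReal (u y ^ 2) / ENNReal.ofReal (D ^ p) ≤
        ENNReal.ofReal ((u x - u y) ^ 2 / dist x y ^ p) := by
    filter_upwards [ae_restrict_mem hA, (ae_restrict_iff' hA).2 hu0] with x hxA hx0 y hyΩ
    rw [hx0, zero_sub, neg_sq]
    exact ofReal_div_rpow_le_ofReal_div_rpow (sq_nonneg _)
      (dist_pos.2 fun hxy => hAΩ.ne_of_mem hxA hyΩ hxy) (hD x hxA y hyΩ) hp
  calc μ A / ENNReal.ofReal (D ^ p) * ∫⁻ y in Ω, ENNReal.ofReal (u y ^ 2) ∂μ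
      = μ A * ((∫⁻ y in Ω, ENNReal.ofReal (u y ^ 2) ∂μ) * (ENNReal.ofReal (D ^ p))⁻¹) := by
        rw [div_eq_mul_inv, mul_right_comm, mul_assoc]
    _ ≤ μ A * ∫⁻ y in Ω, ENNReal.ofReal (u y ^ 2) / ENNReal.ofReal (D ^ p) ∂μ := by
        gcongr
        exact lintegral_mul_const_le _ _
    _ ≤ _ := mul_setLIntegral_le_setLIntegral_prod hf hΩ hbound

theorem stmt0_general (n : ℕ) (s : ℝ) (hs : s ∈ Set.Ioo (0:ℝ) 1)
    (Ω : Set (EuclideanSpace ℝ (Fin n))) (hΩo : IsOpen Ω)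
    (u : EuclideanSpace ℝ (Fin n) → ℝ) (hum : Measurable u)
    (hu0 : ∀ᵐ x : EuclideanSpace ℝ (Fin n), x ∉ Ω → u x = 0)
    (R : ℝ) (hΩR : Ω ⊆ Metric.ball 0 R) :
    (volume (Metric.ball (0 : EuclideanSpace ℝ (Fin n)) R \ Ω) /
        ENNReal.ofReal ((2*R) ^ ((n : ℝ) + 2*s))) *
      ∫⁻ x in Ω, ENNReal.ofReal ((u x)^2) ≤
    ∫⁻ p in {p : EuclideanSpace ℝ (Fin n) × EuclideanSpace ℝ (Fin n) |
        p.1 ∈ Ω ∨ p.2 ∈ Ω},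
      ENNReal.ofReal ((u p.1 - u p.2)^2 / dist p.1 p.2 ^ ((n : ℝ) + 2*s)) := by
  have hdist : ∀ x ∈ Metric.ball 0 R \ Ω, ∀ y ∈ Ω, dist x y ≤ 2 * R := fun x hx y hy => by
    linarith [dist_triangle_right x y 0, Metric.mem_ball.1 hx.1, Metric.mem_ball.1 (hΩR hy)]
  calc _ ≤ ∫⁻ p in (Metric.ball 0 R \ Ω) ×ˢ Ω,
          ENNReal.ofReal ((u p.1 - u p.2)^2 / dist p.1 p.2 ^ ((n : ℝ) + 2*s)) := by
        rw [Measure.volume_eq_prod]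
        exact measure_div_rpow_mul_lintegral_sq_le_lintegral_prod hum
          (measurableSet_ball.diff hΩo.measurableSet) hΩo.measurableSet
          Set.disjoint_sdiff_left hdist (by linarith [hs.1]) (hu0.mono fun x hx hxA => hx hxA.2)
    _ ≤ _ := lintegral_mono_set fun p hp => Or.inr hp.2

/-- Fractional Poincaré-type inequality over the cross-region
`Q = ℝ²ⁿ \ ((ℝⁿ\Ω) × (ℝⁿ\Ω))`. -/
theorem stmt0 (n : ℕ) (s : ℝ) (hs : s ∈ Set.Ioo (0:ℝ) 1)
    (Ω : Set (EuclideanSpace ℝ (Fin n))) (hΩo : IsOpen Ω)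
    (hΩb : Bornology.IsBounded Ω)
    (u : EuclideanSpace ℝ (Fin n) → ℝ) (hum : Measurable u)
    (huL2 : MemLp u 2 (volume.restrict Ω))
    (hu0 : ∀ᵐ x : EuclideanSpace ℝ (Fin n), x ∉ Ω → u x = 0)
    (R : ℝ) (hR : 0 < R) (hΩR : Ω ⊆ Metric.ball 0 R)
    (hpos : 0 < volume (Metric.ball (0 : EuclideanSpace ℝ (Fin n)) R \ Ω)) :
    (volume (Metric.ball (0 : EuclideanSpace ℝ (Fin n)) R \ Ω) /
        ENNReal.ofReal ((2*R) ^ ((n : ℝ) + 2*s))) *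
      ∫⁻ x in Ω, ENNReal.ofReal ((u x)^2) ≤
    ∫⁻ p in {p : EuclideanSpace ℝ (Fin n) × EuclideanSpace ℝ (Fin n) |
        p.1 ∈ Ω ∨ p.2 ∈ Ω},
      ENNReal.ofReal ((u p.1 - u p.2)^2 / dist p.1 p.2 ^ ((n : ℝ) + 2*s)) :=
  stmt0_general n s hs Ω hΩo u hum hu0 R hΩR
end

section
/- Let H be a real Hilbert space, (e_j)_{j≥1} an orthonormal-type basis of eigenvectors with eigenvalues 0 < λ_1 < λ_2 ≤ λ_3 ≤ …, and suppose for the associated quadratic forms one has ‖u‖²_H ≤ λ_k ‖u‖²_{L²} for all u ∈ span(e_1,…,e_k) and ‖u‖²_H ≥ λ_{k+1} ‖u‖²_{L²} for all u in the orthogonal complement P_{k+1} of span(e_1,…,e_k). Let m : Ω → ℝ be measurable with λ_k < m(x) < λ_{k+1} a.e. If u_0 ∈ H satisfies ⟨u_0, φ⟩_H = ∫_Ω m(x) u_0(x) φ(x) dx for all φ ∈ H, then u_0 = 0. -/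
/-!
Split `u₀ = u₁ + u₂` with `u₁ ∈ H_k` and `u₂ ∈ H_kᗮ`, and write `B(f, g) = ∫ m f g` on `L²`.
Testing the equation against `u₁` and `u₂` gives `‖u₁‖² = B(Tu₁, Tu₁) + B(Tu₁, Tu₂)` and
`‖u₂‖² = B(Tu₁, Tu₂) + B(Tu₂, Tu₂)`. Since `λ_k < m < λ_{k+1}`,
`‖u₁‖² ≤ λ_k ‖Tu₁‖² ≤ B(Tu₁, Tu₁)` and `B(Tu₂, Tu₂) ≤ λ_{k+1} ‖Tu₂‖² ≤ ‖u₂‖²`, which forces the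
cross term to vanish and both chains to be equalities; strictness of the bounds on `m` then gives
`Tu₁ = Tu₂ = 0`.
-/

open MeasureTheory ENNReal
open scoped RealInnerProductSpace

namespace MeasureTheory.Lp

variable {α : Type*} [MeasurableSpace α] {μ : Measure α}

theorem integrable_mul (f g : Lp ℝ 2 μ) : Integrable (fun x => f x * g x) μ := by
  simpa [mul_comm] using L2.integrable_inner (𝕜 := ℝ) f g

theorem integral_mul_self (f : Lp ℝ 2 μ) : ∫ x, f x * f x ∂μ = ‖f‖ ^ 2 := by
  rw [← real_inner_self_eq_norm_sq, L2.inner_def]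
  simp [sq]

theorem integrable_weight_mul_mul {w : α → ℝ} {C : ℝ} (hw : AEStronglyMeasurable w μ)
    (hC : ∀ᵐ x ∂μ, ‖w x‖ ≤ C) (f g : Lp ℝ 2 μ) :
    Integrable (fun x => w x * f x * g x) μ := by
  simpa only [mul_assoc] using (integrable_mul f g).bdd_mul hw hC

theorem integrable_const_mul_mul (c : ℝ) (f g : Lp ℝ 2 μ) :
    Integrable (fun x => c * f x * g x) μ := by
  simpa only [mul_assoc] using (integrable_mul f g).const_mul c

theorem integral_const_mul_mul_self (c : ℝ) (f : Lp ℝ 2 μ) :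
    ∫ x, c * f x * f x ∂μ = c * ‖f‖ ^ 2 := by
  simp_rw [mul_assoc, integral_const_mul, integral_mul_self]

theorem integral_weight_mul_add (w : α → ℝ) {f g h : Lp ℝ 2 μ}
    (hf : Integrable (fun x => w x * f x * h x) μ)
    (hg : Integrable (fun x => w x * g x * h x) μ) :
    ∫ x, w x * (f + g : Lp ℝ 2 μ) x * h x ∂μ =
      ∫ x, w x * f x * h x ∂μ + ∫ x, w x * g x * h x ∂μ := by
  rw [← integral_add hf hg]
  refine integral_congr_ae ?_
  filter_upwards [coeFn_add f g] with x hx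
  rw [hx, Pi.add_apply]
  ring

theorem integral_weight_mul_self_mono {w₁ w₂ : α → ℝ} {f : Lp ℝ 2 μ}
    (hw : ∀ᵐ x ∂μ, w₁ x ≤ w₂ x)
    (h₁ : Integrable (fun x => w₁ x * f x * f x) μ)
    (h₂ : Integrable (fun x => w₂ x * f x * f x) μ) :
    ∫ x, w₁ x * f x * f x ∂μ ≤ ∫ x, w₂ x * f x * f x ∂μ := by
  refine integral_mono_ae h₁ h₂ ?_
  filter_upwards [hw] with x hx
  simp only [mul_assoc]
  exact mul_le_mul_of_nonneg_right hx (mul_self_nonneg _)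

theorem eq_zero_of_integral_weight_mul_self_le {w₁ w₂ : α → ℝ} {f : Lp ℝ 2 μ}
    (hw : ∀ᵐ x ∂μ, w₁ x < w₂ x)
    (h₁ : Integrable (fun x => w₁ x * f x * f x) μ)
    (h₂ : Integrable (fun x => w₂ x * f x * f x) μ)
    (hle : ∫ x, w₂ x * f x * f x ∂μ ≤ ∫ x, w₁ x * f x * f x ∂μ) : f = 0 := by
  set g := fun x => (w₂ x - w₁ x) * (f x * f x)
  have hg_eq : g = fun x => w₂ x * f x * f x - w₁ x * f x * f x := by
    funext x
    simp only [g]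
    ring
  have hg_nonneg : 0 ≤ᵐ[μ] g := by
    filter_upwards [hw] with x hx
    exact mul_nonneg (sub_nonneg.2 hx.le) (mul_self_nonneg _)
  have hg_int : Integrable g μ := hg_eq ▸ h₂.sub h₁
  have hg_zero : ∫ x, g x ∂μ = 0 := by
    refine le_antisymm ?_ (integral_nonneg_of_ae hg_nonneg)
    rw [hg_eq, integral_sub h₂ h₁]
    linarith
  rw [eq_zero_iff_ae_eq_zero]
  filter_upwards [(integral_eq_zero_iff_of_nonneg_ae hg_nonneg hg_int).1 hg_zero, hw]
    with x hx hwx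
  simpa [g, (sub_pos.2 hwx).ne'] using hx

end MeasureTheory.Lp

theorem stmt2_general {α : Type*} [MeasurableSpace α] (μ : Measure α)
    {Z : Type*} [NormedAddCommGroup Z] [InnerProductSpace ℝ Z]
    (T : Z →L[ℝ] Lp ℝ 2 μ) (hTinj : Function.Injective T)
    (e : ℕ → Z) (lam : ℕ → ℝ) (k : ℕ)
    (hHk : ∀ u ∈ Submodule.span ℝ (e '' Set.Icc 1 k), ‖u‖^2 ≤ lam k * ‖T u‖^2)
    (hPk : ∀ u ∈ (Submodule.span ℝ (e '' Set.Icc 1 k))ᗮ,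
      lam (k+1) * ‖T u‖^2 ≤ ‖u‖^2)
    (m : α → ℝ) (hm : Measurable m)
    (hmb : ∀ᵐ x ∂μ, lam k < m x ∧ m x < lam (k+1))
    (u₀ : Z)
    (heq : ∀ φ : Z, ⟪u₀, φ⟫ =
      ∫ x, m x * (T u₀ : α → ℝ) x * (T φ : α → ℝ) x ∂μ) :
    u₀ = 0 := by
  set S := Submodule.span ℝ (e '' Set.Icc 1 k)
  have : FiniteDimensional ℝ S :=
    FiniteDimensional.span_of_finite ℝ ((Set.finite_Icc 1 k).image e)
  obtain ⟨u₁, hu₁, u₂, hu₂, rfl⟩ := S.exists_add_mem_mem_orthogonal u₀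
  have hperp : ⟪u₁, u₂⟫ = 0 := S.inner_right_of_mem_orthogonal hu₁ hu₂
  have hm_bdd : ∀ᵐ x ∂μ, ‖m x‖ ≤ max |lam k| |lam (k+1)| :=
    hmb.mono fun _ h => abs_le_max_abs_abs h.1.le h.2.le
  have hint := Lp.integrable_weight_mul_mul hm.aestronglyMeasurable hm_bdd
  have hcint := Lp.integrable_const_mul_mul (μ := μ)
  have h₁ := heq u₁
  have h₂ := heq u₂
  rw [map_add, Lp.integral_weight_mul_add m (hint _ _) (hint _ _)] at h₁ h₂
  rw [inner_add_left, real_inner_self_eq_norm_sq, real_inner_comm, hperp, add_zero] at h₁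
  rw [inner_add_left, real_inner_self_eq_norm_sq, hperp, zero_add] at h₂
  set F := T u₁
  set G := T u₂
  have hsymm : ∫ x, m x * G x * F x ∂μ = ∫ x, m x * F x * G x ∂μ := by
    simp only [mul_right_comm (m _) (G _)]
  have hF_low := Lp.integral_weight_mul_self_mono (f := F) (hmb.mono fun _ h => h.1.le)
    (hcint _ _ _) (hint _ _)
  have hG_up := Lp.integral_weight_mul_self_mono (f := G) (hmb.mono fun _ h => h.2.le)
    (hint _ _) (hcint _ _ _)
  rw [Lp.integral_const_mul_mul_self] at hF_low hG_up
  have hF : F = 0 := Lp.eq_zero_of_integral_weight_mul_self_le (hmb.mono fun _ h => h.1)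
    (hcint _ _ _) (hint _ _) (by
      rw [Lp.integral_const_mul_mul_self]
      linarith [hHk u₁ hu₁, hPk u₂ hu₂])
  have hG : G = 0 := Lp.eq_zero_of_integral_weight_mul_self_le (hmb.mono fun _ h => h.2)
    (hint _ _) (hcint _ _ _) (by
      rw [Lp.integral_const_mul_mul_self]
      linarith [hHk u₁ hu₁, hPk u₂ hu₂])
  rw [(injective_iff_map_eq_zero T).1 hTinj u₁ hF,
    (injective_iff_map_eq_zero T).1 hTinj u₂ hG, add_zero]

/-- Non-resonance lemma: if `m` lies strictly between consecutive eigenvalues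
`λ_k < m(x) < λ_{k+1}` a.e., then the only `u₀` satisfying
`⟪u₀, φ⟫ = ∫ m u₀ φ` for all `φ` is `u₀ = 0`.  Here `Z` is an abstract real
Hilbert space realized inside `L²(μ)` via the (injective) embedding `T`,
`H_k = span(e_1, …, e_k)` and `P_{k+1} = H_kᗮ`. -/
theorem stmt2 {α : Type*} [MeasurableSpace α] (μ : Measure α)
    {Z : Type*} [NormedAddCommGroup Z] [InnerProductSpace ℝ Z] [CompleteSpace Z]
    (T : Z →L[ℝ] Lp ℝ 2 μ) (hTinj : Function.Injective T)
    (e : ℕ → Z) (lam : ℕ → ℝ) (k : ℕ) (hk : 1 ≤ k)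
    (hlampos : 0 < lam 1)
    (hmono : ∀ i j, 1 ≤ i → i ≤ j → lam i ≤ lam j)
    (hlt : lam k < lam (k+1))
    (hHk : ∀ u ∈ Submodule.span ℝ (e '' Set.Icc 1 k), ‖u‖^2 ≤ lam k * ‖T u‖^2)
    (hPk : ∀ u ∈ (Submodule.span ℝ (e '' Set.Icc 1 k))ᗮ,
      lam (k+1) * ‖T u‖^2 ≤ ‖u‖^2)
    (m : α → ℝ) (hm : Measurable m)
    (hmb : ∀ᵐ x ∂μ, lam k < m x ∧ m x < lam (k+1))
    (u₀ : Z)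
    (heq : ∀ φ : Z, ⟪u₀, φ⟫ =
      ∫ x, m x * (T u₀ : α → ℝ) x * (T φ : α → ℝ) x ∂μ) :
    u₀ = 0 :=
  stmt2_general μ T hTinj e lam k hHk hPk m hm hmb u₀ heq
end

section
/- Let Z be a Hilbert space compactly embedded in L²(Ω), with eigenbasis (e_j) of a symmetric bilinear form and eigenvalues 0 < λ_1 < λ_2 ≤ …, satisfying ‖u‖²_Z ≥ λ_1 ‖u‖²_{L²} for all u ∈ Z. Let F : Ω × ℝ → ℝ satisfy |F(x,t)| ≤ a(x)|t| + (b/2)t² with a ∈ L²(Ω), and suppose limsup_{|t|→∞} 2F(x,t)/t² ≤ ᾱ(x) < λ_1 a.e. Then the functional J(u) = (1/2)‖u‖²_Z − ∫_Ω F(x,u(x)) dx satisfies liminf_{‖u‖_Z → ∞} J(u)/‖u‖²_Z > 0; in particular J is coercive on Z. -/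
/-!
Suppose `J(uₖ) ≤ δₖ ‖uₖ‖²` along a sequence with `‖uₖ‖ → ∞` and `δₖ → 0`. By compactness of `T`,
a subsequence of `wₖ = T(uₖ / ‖uₖ‖)` converges to some `w` in `L²` and almost everywhere.
The generalized Fatou lemma, with the growth bound as a convergent dominating sequence, and the
pointwise bound `limsup 2F(x, ‖uₖ‖ wₖ(x)) / ‖uₖ‖² ≤ A⁺(x) w(x)²` give `1 ≤ ∫ A⁺ w²`. Since
`A⁺ < λ₁` a.e. and `λ₁ ‖w‖² ≤ 1`, this forces `w = 0`, which is absurd. Hence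
`J(u) ≥ ε ‖u‖²` for large `‖u‖`.
-/

open MeasureTheory Filter ENNReal
open scoped Topology

section Asymptotics

theorem abs_two_mul_le_sq_add_mul_sq {y a t b : ℝ} (h : |y| ≤ a * |t| + b / 2 * t ^ 2) :
    |2 * y| ≤ a ^ 2 + (b + 1) * t ^ 2 := by
  rw [abs_mul, abs_two]
  nlinarith [sq_nonneg (a - |t|), sq_abs t]

variable {f : ℝ → ℝ} {h c : ℝ}

theorem isBoundedUnder_div_sq_cobounded (hf : ∀ t, f t ≤ h + c * t ^ 2) :
    IsBoundedUnder (· ≤ ·) (Bornology.cobounded ℝ) fun t => f t / t ^ 2 := by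
  refine ⟨|h| + c, eventually_map.mpr ?_⟩
  filter_upwards [(tendsto_norm_cobounded_atTop (E := ℝ)).eventually_ge_atTop 1] with t ht
  have ht2 : 1 ≤ t ^ 2 := by simpa [Real.norm_eq_abs, one_le_sq_iff_one_le_abs] using ht
  rw [div_le_iff₀ (by positivity)]
  nlinarith [hf t, le_abs_self h, abs_nonneg h]

theorem eventually_div_sq_le_of_limsup_le (hf : ∀ t, f t ≤ h + c * t ^ 2) {A : ℝ}
    (hA : limsup (fun t => f t / t ^ 2) (Bornology.cobounded ℝ) ≤ A) {N y : ℕ → ℝ} {W : ℝ}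
    (hN : Tendsto N atTop atTop) (hy : Tendsto y atTop (𝓝 W)) {ε : ℝ} (hε : 0 < ε) :
    ∀ᶠ k in atTop, f (N k * y k) / N k ^ 2 ≤ A * W ^ 2 + ε := by
  rcases eq_or_ne W 0 with rfl | hW
  · have hlim : Tendsto (fun k => h * (N k ^ 2)⁻¹ + c * y k ^ 2) atTop (𝓝 (h * 0 + c * 0 ^ 2)) :=
      (tendsto_const_nhds.mul ((tendsto_pow_atTop two_ne_zero).comp hN).inv_tendsto_atTop).add
        (tendsto_const_nhds.mul (hy.pow 2))
    filter_upwards [hlim.eventually_lt_const (by simpa using hε), hN.eventually_gt_atTop 0]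
      with k hk hNk
    rw [div_le_iff₀ (by positivity)]
    have := hf (N k * y k)
    field_simp at hk
    nlinarith
  · have hW2 : 0 < W ^ 2 := by positivity
    set δ := ε / (2 * W ^ 2)
    have hδ : (A + δ) * W ^ 2 < A * W ^ 2 + ε := by
      have : δ * W ^ 2 = ε / 2 := by simp only [δ]; field_simp
      nlinarith
    have hcob : Tendsto (fun k => N k * y k) atTop (Bornology.cobounded ℝ) := by
      rw [← tendsto_norm_atTop_iff_cobounded]
      simpa [Real.norm_eq_abs, abs_mul] using
        (hN.atTop_mul_pos (abs_pos.mpr hW) hy.abs).congr' <|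
          (hN.eventually_ge_atTop 0).mono fun k hk => by simp [abs_of_nonneg hk]
    have hlt := hcob.eventually <| eventually_lt_of_limsup_lt
      (hA.trans_lt (lt_add_of_pos_right A (by positivity : 0 < δ)))
      (isBoundedUnder_div_sq_cobounded hf)
    filter_upwards [hlt, hcob.eventually (Bornology.eventually_ne_cobounded 0),
      ((tendsto_const_nhds.mul (hy.pow 2)).eventually_lt_const hδ), hN.eventually_gt_atTop 0]
      with k hk hk0 hky hNk
    rw [div_lt_iff₀ (by positivity)] at hk
    rw [div_le_iff₀ (by positivity)]
    nlinarith

end Asymptotics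

namespace MeasureTheory

variable {α : Type*} [MeasurableSpace α] {μ : Measure α}

theorem L2.integral_sq_eq_norm_sq (g : Lp ℝ 2 μ) : ∫ x, g x ^ 2 ∂μ = ‖g‖ ^ 2 := by
  rw [← real_inner_self_eq_norm_sq, L2.inner_def]
  simp [sq]

theorem measurable_nemytskii {f : α → ℝ → ℝ} (hfm : ∀ t, Measurable (f · t))
    (hfc : ∀ x, Continuous (f x)) {u : α → ℝ} (hu : Measurable u) :
    Measurable fun x => f x (u x) :=
  (measurable_uncurry_of_continuous_of_measurable hfc hfm).comp (hu.prodMk measurable_id)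

theorem integrable_nemytskii {f : α → ℝ → ℝ} (hfm : ∀ t, Measurable (f · t))
    (hfc : ∀ x, Continuous (f x)) {h : α → ℝ} (hh : Integrable h μ) {c : ℝ}
    (hf : ∀ᵐ x ∂μ, ∀ t, |f x t| ≤ h x + c * t ^ 2) (u : Lp ℝ 2 μ) (r : ℝ) :
    Integrable (fun x => f x (r * u x)) μ := by
  refine (hh.add ((Lp.memLp u).integrable_sq.const_mul (c * r ^ 2))).mono'
    (measurable_nemytskii hfm hfc
      (measurable_const.mul (Lp.stronglyMeasurable u).measurable)).aestronglyMeasurable ?_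
  filter_upwards [hf] with x hx
  simpa [mul_pow, mul_assoc] using hx (r * u x)

theorem integral_le_of_eventually_sub_le_of_tendsto {H : ℕ → α → ℝ} {g : α → ℝ} {s : ℕ → ℝ}
    {L : ℝ} (hH0 : ∀ k, 0 ≤ᵐ[μ] H k) (hHi : ∀ k, Integrable (H k) μ) (hg : Integrable g μ)
    (hgH : ∀ᵐ x ∂μ, ∀ ε > 0, ∀ᶠ k in atTop, g x - ε ≤ H k x)
    (hHs : ∀ k, ∫ x, H k x ∂μ ≤ s k) (hs : Tendsto s atTop (𝓝 L)) :
    ∫ x, g x ∂μ ≤ L := by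
  have hL : 0 ≤ L := ge_of_tendsto' hs fun k => (integral_nonneg_of_ae (hH0 k)).trans (hHs k)
  have hpt : ∀ᵐ x ∂μ, ENNReal.ofReal (g x) ≤ liminf (fun k => ENNReal.ofReal (H k x)) atTop := by
    filter_upwards [hgH] with x hx
    refine ENNReal.le_of_forall_pos_le_add fun ε hε _ => ?_
    calc ENNReal.ofReal (g x) ≤ ENNReal.ofReal (g x - ε) + ENNReal.ofReal ε := by
          simpa using ENNReal.ofReal_add_le (p := g x - ε) (q := ε)
      _ ≤ liminf (fun k => ENNReal.ofReal (H k x)) atTop + ε := by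
          rw [ENNReal.ofReal_coe_nnreal]
          gcongr
          exact le_liminf_of_le (by isBoundedDefault)
            ((hx ε hε).mono fun k hk => ENNReal.ofReal_le_ofReal hk)
  have hfatou : ∫⁻ x, ENNReal.ofReal (g x) ∂μ ≤ ENNReal.ofReal L :=
    calc ∫⁻ x, ENNReal.ofReal (g x) ∂μ
        ≤ ∫⁻ x, liminf (fun k => ENNReal.ofReal (H k x)) atTop ∂μ := lintegral_mono_ae hpt
      _ ≤ liminf (fun k => ∫⁻ x, ENNReal.ofReal (H k x) ∂μ) atTop :=
          lintegral_liminf_le' fun k => (hHi k).aemeasurable.ennreal_ofReal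
      _ = liminf (fun k => ENNReal.ofReal (∫ x, H k x ∂μ)) atTop := by
          simp_rw [ofReal_integral_eq_lintegral_ofReal (hHi _) (hH0 _)]
      _ ≤ liminf (fun k => ENNReal.ofReal (s k)) atTop :=
          liminf_le_liminf (.of_forall fun k => ENNReal.ofReal_le_ofReal (hHs k))
      _ = ENNReal.ofReal L := (ENNReal.tendsto_ofReal hs).liminf_eq
  calc ∫ x, g x ∂μ ≤ (∫⁻ x, ENNReal.ofReal (g x) ∂μ).toReal := by
        rw [integral_eq_lintegral_pos_part_sub_lintegral_neg_part hg]
        exact sub_le_self _ ENNReal.toReal_nonneg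
    _ ≤ L := ENNReal.toReal_le_of_le_ofReal hL hfatou

theorem le_integral_mul_sq_of_le_integral_div_sq {f : α → ℝ → ℝ}
    (hfm : ∀ t, Measurable (f · t)) (hfc : ∀ x, Continuous (f x)) {h : α → ℝ}
    (hh : Integrable h μ) {c : ℝ} (hf : ∀ᵐ x ∂μ, ∀ t, |f x t| ≤ h x + c * t ^ 2)
    {A : α → ℝ} (hA : ∀ᵐ x ∂μ, limsup (fun t => f x t / t ^ 2) (Bornology.cobounded ℝ) ≤ A x)
    {g : ℕ → Lp ℝ 2 μ} {w : Lp ℝ 2 μ} (hg : Tendsto g atTop (𝓝 w))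
    (hgae : ∀ᵐ x ∂μ, Tendsto (fun k => g k x) atTop (𝓝 (w x)))
    (hAw : Integrable (fun x => A x * w x ^ 2) μ) {N : ℕ → ℝ} (hN0 : ∀ k, 0 < N k)
    (hN : Tendsto N atTop atTop) {ρ : ℕ → ℝ} {R : ℝ}
    (hρ : ∀ k, ρ k ≤ (∫ x, f x (N k * g k x) ∂μ) / N k ^ 2) (hρR : Tendsto ρ atTop (𝓝 R)) :
    R ≤ ∫ x, A x * w x ^ 2 ∂μ := by
  -- Fatou's lemma for the nonnegative `H k` is the generalized Fatou lemma for
  -- `f (N k * g k) / N k ^ 2`, with the convergent dominating sequence `h / N k ^ 2 + c * g k ^ 2`.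
  set H : ℕ → α → ℝ := fun k x => h x / N k ^ 2 + c * g k x ^ 2 - f x (N k * g k x) / N k ^ 2
  have hfi := integrable_nemytskii hfm hfc hh hf
  have hgi : ∀ k, Integrable (fun x => g k x ^ 2) μ := fun k => (Lp.memLp (g k)).integrable_sq
  have hH0 : ∀ k, 0 ≤ᵐ[μ] H k := fun k => by
    filter_upwards [hf] with x hx
    have hN2 : 0 < N k ^ 2 := pow_pos (hN0 k) 2
    have hfx : f x (N k * g k x) / N k ^ 2 ≤ h x / N k ^ 2 + c * g k x ^ 2 := by
      rw [div_le_iff₀ hN2, add_mul, div_mul_cancel₀ _ hN2.ne']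
      linarith [(le_abs_self _).trans (hx (N k * g k x))]
    simp only [H, Pi.zero_apply]
    linarith
  have hHi : ∀ k, Integrable (H k) μ := fun k =>
    ((hh.div_const _).add ((hgi k).const_mul c)).sub ((hfi (g k) (N k)).div_const _)
  have hHs : ∀ k, ∫ x, H k x ∂μ ≤ (∫ x, h x ∂μ) / N k ^ 2 + c * ‖g k‖ ^ 2 - ρ k := fun k => by
    rw [integral_sub (f := fun x => h x / N k ^ 2 + c * g k x ^ 2)
      ((hh.div_const _).add ((hgi k).const_mul c)) ((hfi (g k) (N k)).div_const _),
      integral_add (hh.div_const _) ((hgi k).const_mul c), integral_div, integral_div,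
      integral_const_mul, L2.integral_sq_eq_norm_sq]
    linarith [hρ k]
  have hs : Tendsto (fun k => (∫ x, h x ∂μ) / N k ^ 2 + c * ‖g k‖ ^ 2 - ρ k) atTop
      (𝓝 (0 + c * ‖w‖ ^ 2 - R)) :=
    ((tendsto_const_nhds.div_atTop ((tendsto_pow_atTop two_ne_zero).comp hN)).add
      (tendsto_const_nhds.mul (hg.norm.pow 2))).sub hρR
  have hgH : ∀ᵐ x ∂μ, ∀ ε > 0, ∀ᶠ k in atTop,
      c * w x ^ 2 - A x * w x ^ 2 - ε ≤ H k x := by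
    filter_upwards [hgae, hf, hA] with x hx hbound hAx ε hε
    have hdom : Tendsto (fun k => h x / N k ^ 2 + c * g k x ^ 2) atTop (𝓝 (0 + c * w x ^ 2)) :=
      (tendsto_const_nhds.div_atTop ((tendsto_pow_atTop two_ne_zero).comp hN)).add
        (tendsto_const_nhds.mul (hx.pow 2))
    filter_upwards [hdom.eventually_const_lt (by linarith : 0 + c * w x ^ 2 - ε / 2 < _),
      eventually_div_sq_le_of_limsup_le (fun t => (le_abs_self _).trans (hbound t)) hAx hN hx
        (half_pos hε)] with k hk1 hk2
    simp only [H]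
    linarith
  have hlow := integral_le_of_eventually_sub_le_of_tendsto
    (g := fun x => c * w x ^ 2 - A x * w x ^ 2) hH0 hHi
    (((Lp.memLp w).integrable_sq.const_mul c).sub hAw) hgH hHs hs
  rw [integral_sub ((Lp.memLp w).integrable_sq.const_mul c) hAw, integral_const_mul,
    L2.integral_sq_eq_norm_sq] at hlow
  linarith

theorem integral_mul_sq_lt {A : α → ℝ} {lam : ℝ} (hA : ∀ᵐ x ∂μ, A x < lam) {w : Lp ℝ 2 μ}
    (hAw : Integrable (fun x => A x * w x ^ 2) μ) (hw : w ≠ 0) :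
    ∫ x, A x * w x ^ 2 ∂μ < lam * ‖w‖ ^ 2 := by
  have hwi := (Lp.memLp w).integrable_sq.const_mul lam
  have hpos : 0 ≤ᵐ[μ] fun x => lam * w x ^ 2 - A x * w x ^ 2 := by
    filter_upwards [hA] with x hx
    simpa [← sub_mul] using mul_nonneg (sub_nonneg.mpr hx.le) (sq_nonneg (w x))
  rw [← L2.integral_sq_eq_norm_sq, ← integral_const_mul, ← sub_pos, ← integral_sub hwi hAw]
  refine lt_of_le_of_ne (integral_nonneg_of_ae hpos) fun h0 => hw ?_
  have hzero := (integral_eq_zero_iff_of_nonneg_ae hpos (hwi.sub hAw)).mp h0.symm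
  rw [Lp.eq_zero_iff_ae_eq_zero]
  filter_upwards [hzero, hA] with x hx hAx
  have : (lam - A x) * w x ^ 2 = 0 := by simpa [sub_mul] using hx
  simpa [(sub_pos.mpr hAx).ne'] using this

end MeasureTheory

theorem IsCompactOperator.exists_subseq_tendsto_ae {α : Type*} [MeasurableSpace α]
    {μ : Measure α} {E F : Type*} [NormedAddCommGroup E] [NormedSpace ℝ E]
    [NormedAddCommGroup F] [NormedSpace ℝ F] {p : ℝ≥0∞} [Fact (1 ≤ p)]
    {T : E →L[ℝ] Lp F p μ} (hT : IsCompactOperator T) {v : ℕ → E} (hv : ∀ k, ‖v k‖ ≤ 1) :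
    ∃ φ : ℕ → ℕ, StrictMono φ ∧ ∃ w : Lp F p μ, Tendsto (fun k => T (v (φ k))) atTop (𝓝 w) ∧
      ∀ᵐ x ∂μ, Tendsto (fun k => T (v (φ k)) x) atTop (𝓝 (w x)) := by
  obtain ⟨w, -, φ, hφ, hw⟩ :=
    (hT.isCompact_closure_image_of_bounded (f := (T : E →ₗ[ℝ] Lp F p μ))
      (Metric.isBounded_closedBall (x := (0 : E)) (r := 1))).tendsto_subseq
      (x := fun k => T (v k)) fun k => subset_closure ⟨v k, by simpa using hv k, rfl⟩
  obtain ⟨ψ, hψ, hae⟩ := (tendstoInMeasure_of_tendsto_Lp hw).exists_seq_tendsto_ae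
  exact ⟨φ ∘ ψ, hφ.comp hψ, w, hw.comp hψ.tendsto_atTop, hae⟩

section Energy

variable {α : Type*} [MeasurableSpace α] {μ : Measure α} {Z : Type*} [NormedAddCommGroup Z]
  [NormedSpace ℝ Z]

noncomputable def energy (T : Z →L[ℝ] Lp ℝ 2 μ) (F : α → ℝ → ℝ) (u : Z) : ℝ :=
  (1 / 2) * ‖u‖ ^ 2 - ∫ x, F x (T u x) ∂μ

theorem exists_mul_norm_sq_lt_energy {T : Z →L[ℝ] Lp ℝ 2 μ} (hT : IsCompactOperator T)
    {lam : ℝ} (hlam : 0 < lam) (hZ : ∀ u : Z, lam * ‖T u‖ ^ 2 ≤ ‖u‖ ^ 2)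
    {F : α → ℝ → ℝ} (hFm : ∀ t, Measurable (F · t)) (hFc : ∀ x, Continuous (F x))
    {a : α → ℝ} (ha : MemLp a 2 μ) {b : ℝ}
    (hgrowth : ∀ᵐ x ∂μ, ∀ t, |F x t| ≤ a x * |t| + b / 2 * t ^ 2)
    {A : α → ℝ} (hAm : Measurable A)
    (hA : ∀ᵐ x ∂μ, limsup (fun t => 2 * F x t / t ^ 2) (Bornology.cobounded ℝ) ≤ A x ∧
      A x < lam)
    {u : ℕ → Z} (hu0 : ∀ k, 0 < ‖u k‖) (hu : Tendsto (fun k => ‖u k‖) atTop atTop)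
    {δ : ℕ → ℝ} (hδ : Tendsto δ atTop (𝓝 0)) :
    ∃ k, δ k * ‖u k‖ ^ 2 < energy T F (u k) := by
  by_contra! hJ
  set v : ℕ → Z := fun k => ‖u k‖⁻¹ • u k
  have hv : ∀ k, ‖v k‖ = 1 := fun k => by simp [v, norm_smul, (hu0 k).ne']
  obtain ⟨φ, hφ, w, hw, hwae⟩ := hT.exists_subseq_tendsto_ae fun k => (hv k).le
  have hTu : ∀ k, (T (u k) : α → ℝ) =ᵐ[μ] fun x => ‖u k‖ * T (v k) x := fun k => by
    have : T (u k) = ‖u k‖ • T (v k) := by simp [v, smul_smul, mul_inv_cancel₀ (hu0 k).ne']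
    rw [this]
    exact Lp.coeFn_smul _ _
  set A' : α → ℝ := fun x => max (A x) 0
  have hA'lt : ∀ᵐ x ∂μ, A' x < lam := hA.mono fun x hx => max_lt hx.2 hlam
  have hA'w : Integrable (fun x => A' x * w x ^ 2) μ :=
    (Lp.memLp w).integrable_sq.bdd_mul (hAm.max measurable_const).aestronglyMeasurable
      (hA'lt.mono fun x hx => (Real.norm_of_nonneg (le_max_right _ _)).trans_le hx.le)
  have hgrowth' : ∀ᵐ x ∂μ, ∀ t, |2 * F x t| ≤ a x ^ 2 + (b + 1) * t ^ 2 :=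
    hgrowth.mono fun x hx t => abs_two_mul_le_sq_add_mul_sq (hx t)
  have hρ : ∀ k, 1 - 2 * δ (φ k) ≤
      (∫ x, 2 * F x (‖u (φ k)‖ * T (v (φ k)) x) ∂μ) / ‖u (φ k)‖ ^ 2 := fun k => by
    have hk := hJ (φ k)
    have hI : ∫ x, F x (T (u (φ k)) x) ∂μ = ∫ x, F x (‖u (φ k)‖ * T (v (φ k)) x) ∂μ :=
      integral_congr_ae ((hTu (φ k)).mono fun x hx => congrArg (F x) hx)
    rw [energy, hI] at hk
    rw [integral_const_mul, le_div_iff₀ (pow_pos (hu0 (φ k)) 2)]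
    linarith
  have hlow : 1 ≤ ∫ x, A' x * w x ^ 2 ∂μ :=
    le_integral_mul_sq_of_le_integral_div_sq (f := fun x t => 2 * F x t)
      (fun t => (hFm t).const_mul 2) (fun x => continuous_const.mul (hFc x)) ha.integrable_sq
      hgrowth' (hA.mono fun x hx => hx.1.trans (le_max_left _ _)) hw hwae hA'w
      (fun k => hu0 (φ k)) (hu.comp hφ.tendsto_atTop) hρ
      (by simpa using tendsto_const_nhds.sub ((hδ.comp hφ.tendsto_atTop).const_mul 2))
  have hw1 : lam * ‖w‖ ^ 2 ≤ 1 :=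
    le_of_tendsto' ((hw.norm.pow 2).const_mul lam) fun k => by simpa [hv] using hZ (v (φ k))
  rcases eq_or_ne w 0 with rfl | hw0
  · have : ∫ x, A' x * (0 : Lp ℝ 2 μ) x ^ 2 ∂μ = 0 :=
      integral_eq_zero_of_ae <| (Lp.coeFn_zero ℝ 2 μ).mono fun x hx => by
        simp only [hx, Pi.zero_apply]
        ring
    linarith
  · linarith [integral_mul_sq_lt hA'lt hA'w hw0]

end Energy

theorem exists_forall_le_of_le_div_norm_sq {E : Type*} [SeminormedAddCommGroup E] {J : E → ℝ}
    {ε M : ℝ} (hε : 0 < ε) (hJ : ∀ u, M ≤ ‖u‖ → ε ≤ J u / ‖u‖ ^ 2) (C : ℝ) :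
    ∃ M', ∀ u, M' ≤ ‖u‖ → C ≤ J u := by
  refine ⟨max M (max 1 (|C| / ε)), fun u hu => ?_⟩
  obtain ⟨hM, h1, hC⟩ : M ≤ ‖u‖ ∧ 1 ≤ ‖u‖ ∧ |C| / ε ≤ ‖u‖ := by simpa using hu
  have hJu := hJ u hM
  rw [le_div_iff₀ (by positivity)] at hJu
  rw [div_le_iff₀ hε] at hC
  nlinarith [le_abs_self C, mul_le_mul_of_nonneg_left (le_self_pow₀ h1 two_ne_zero) hε.le]

theorem stmt5_general {α : Type*} [MeasurableSpace α] (μ : Measure α)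
    {Z : Type*} [NormedAddCommGroup Z] [InnerProductSpace ℝ Z]
    (T : Z →L[ℝ] Lp ℝ 2 μ) (hTc : IsCompactOperator (⇑T))
    (lam1 : ℝ) (hlam1 : 0 < lam1)
    (hZ : ∀ u : Z, lam1 * ‖T u‖^2 ≤ ‖u‖^2)
    (F : α → ℝ → ℝ) (a : α → ℝ) (b : ℝ)
    (hFm : ∀ t : ℝ, Measurable (fun x => F x t)) (hFc : ∀ x, Continuous (F x))
    (ha : MemLp a 2 μ)
    (hgrowth : ∀ᵐ x ∂μ, ∀ t : ℝ, |F x t| ≤ a x * |t| + b/2 * t^2)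
    (A : α → ℝ) (hAm : Measurable A)
    (hA : ∀ᵐ x ∂μ,
      limsup (fun t : ℝ => 2 * F x t / t^2) (Bornology.cobounded ℝ) ≤ A x ∧
        A x < lam1) :
    (∃ ε > (0:ℝ), ∃ M : ℝ, ∀ u : Z, M ≤ ‖u‖ →
      ε ≤ ((1/2) * ‖u‖^2 - ∫ x, F x ((T u : α → ℝ) x) ∂μ) / ‖u‖^2) ∧
    (∀ C : ℝ, ∃ M : ℝ, ∀ u : Z, M ≤ ‖u‖ →
      C ≤ (1/2) * ‖u‖^2 - ∫ x, F x ((T u : α → ℝ) x) ∂μ) := by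
  obtain ⟨ε, hε, M, hM⟩ : ∃ ε > (0:ℝ), ∃ M : ℝ, ∀ u : Z, M ≤ ‖u‖ →
      ε ≤ energy T F u / ‖u‖ ^ 2 := by
    by_contra! h
    choose u hu hJ using fun k : ℕ => h (1 / ((k : ℝ) + 1)) (by positivity) ((k : ℝ) + 1)
    have hu0 : ∀ k, 0 < ‖u k‖ := fun k => lt_of_lt_of_le (by positivity) (hu k)
    obtain ⟨k, hk⟩ := exists_mul_norm_sq_lt_energy hTc hlam1 hZ hFm hFc ha hgrowth hAm hA hu0
      (tendsto_atTop_mono hu (tendsto_atTop_add_const_right _ 1 tendsto_natCast_atTop_atTop))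
      tendsto_one_div_add_atTop_nhds_zero_nat
    have hJk := hJ k
    rw [div_lt_iff₀ (pow_pos (hu0 k) 2)] at hJk
    linarith
  exact ⟨⟨ε, hε, M, hM⟩, exists_forall_le_of_le_div_norm_sq hε hM⟩

/-- Coercivity of `J(u) = ½‖u‖²_Z − ∫_Ω F(x,u)` when
`limsup_{|t|→∞} 2F(x,t)/t² ≤ ᾱ(x) < λ₁` a.e.: one has
`liminf_{‖u‖_Z→∞} J(u)/‖u‖²_Z > 0`, and in particular `J` is coercive.
`Z` is a real Hilbert space compactly embedded in `L²(μ)` via `T`, and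
`λ₁` satisfies `‖u‖²_Z ≥ λ₁‖Tu‖²_{L²}`. -/
theorem stmt5 {α : Type*} [MeasurableSpace α] (μ : Measure α)
    {Z : Type*} [NormedAddCommGroup Z] [InnerProductSpace ℝ Z] [CompleteSpace Z]
    (T : Z →L[ℝ] Lp ℝ 2 μ) (hTc : IsCompactOperator (⇑T))
    (hTinj : Function.Injective T)
    (lam1 : ℝ) (hlam1 : 0 < lam1)
    (hZ : ∀ u : Z, lam1 * ‖T u‖^2 ≤ ‖u‖^2)
    (F : α → ℝ → ℝ) (a : α → ℝ) (b : ℝ) (hb : 0 ≤ b)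
    (hFm : ∀ t : ℝ, Measurable (fun x => F x t)) (hFc : ∀ x, Continuous (F x))
    (ha : MemLp a 2 μ)
    (hgrowth : ∀ᵐ x ∂μ, ∀ t : ℝ, |F x t| ≤ a x * |t| + b/2 * t^2)
    (A : α → ℝ) (hAm : Measurable A)
    (hA : ∀ᵐ x ∂μ,
      limsup (fun t : ℝ => 2 * F x t / t^2) (Bornology.cobounded ℝ) ≤ A x ∧
        A x < lam1) :
    (∃ ε > (0:ℝ), ∃ M : ℝ, ∀ u : Z, M ≤ ‖u‖ →
      ε ≤ ((1/2) * ‖u‖^2 - ∫ x, F x ((T u : α → ℝ) x) ∂μ) / ‖u‖^2) ∧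
    (∀ C : ℝ, ∃ M : ℝ, ∀ u : Z, M ≤ ‖u‖ →
      C ≤ (1/2) * ‖u‖^2 - ∫ x, F x ((T u : α → ℝ) x) ∂μ) :=
  stmt5_general μ T hTc lam1 hlam1 hZ F a b hFm hFc ha hgrowth A hAm hA
end

section
/- Suppose f : Ω × ℝ → ℝ satisfies |f(x,t)| ≤ a(x)+b|t| (a ∈ L²(Ω), b ≥ 0) and there exists k ≥ 1 with λ_k < (f(x,s)−f(x,t))/(s−t) < λ_{k+1} for all s ≠ t and a.e. x ∈ Ω. Then the weak solution u ∈ Z of ⟨u,φ⟩_Z = ∫_Ω f(x,u(x))φ(x) dx for all φ ∈ Z is unique (if it exists). -/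
open MeasureTheory Filter ENNReal
open scoped RealInnerProductSpace

/-!
Write `w = u₁ - u₂ = v + z` with `v` in the span `H_k` of `e 1, …, e k` and `z ∈ H_kᗮ`. Testing
the equation for `w` against `z - v` gives `‖z‖² - ‖v‖² = ∫ m (Tv + Tz)(Tz - Tv)`, where `m(x)` is
a difference quotient of `f(x, ·)`, hence lies in `(λ_k, λ_{k+1})`. The left side is at least
`∫ λ_{k+1} (Tz)² - λ_k (Tv)²`, and the difference of the two integrands is
`(λ_{k+1} - m) (Tz)² + (m - λ_k) (Tv)² ≥ 0`, so it vanishes a.e.; this forces `Tz = Tv = 0`,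
and `w = 0` by injectivity of `T`.
-/

lemma exists_mem_Ioo_sub_eq_mul {g : ℝ → ℝ} {l L : ℝ}
    (hg : ∀ s t, s ≠ t → l < (g s - g t) / (s - t) ∧ (g s - g t) / (s - t) < L) (s t : ℝ) :
    ∃ m ∈ Set.Ioo l L, g s - g t = m * (s - t) := by
  by_cases hst : s = t
  · -- any slope in `(l, L)` will do, e.g. the one `hg` gives between `1` and `0`
    exact ⟨_, hg 1 0 one_ne_zero, by simp [hst]⟩
  · exact ⟨_, hg s t hst, (div_mul_cancel₀ _ (sub_ne_zero.2 hst)).symm⟩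

section Defect

variable {l L m : ℝ}

lemma mul_add_mul_sub_le_of_mem_Ioo (hm : m ∈ Set.Ioo l L) (p q : ℝ) :
    m * (p + q) * (q - p) ≤ L * q ^ 2 - l * p ^ 2 := by
  nlinarith [hm.1, hm.2, sq_nonneg p, sq_nonneg q]

lemma eq_zero_of_mul_add_mul_sub_eq (hm : m ∈ Set.Ioo l L) {p q : ℝ}
    (h : m * (p + q) * (q - p) = L * q ^ 2 - l * p ^ 2) : p = 0 ∧ q = 0 := by
  have hLm : 0 < L - m := sub_pos.2 hm.2
  have hml : 0 < m - l := sub_pos.2 hm.1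
  obtain ⟨hq, hp⟩ := (add_eq_zero_iff_of_nonneg (mul_nonneg hLm.le (sq_nonneg q))
    (mul_nonneg hml.le (sq_nonneg p))).1 (by linear_combination -h)
  exact ⟨by simpa [hml.ne'] using hp, by simpa [hLm.ne'] using hq⟩

end Defect

namespace MeasureTheory

variable {α : Type*} [MeasurableSpace α] {μ : Measure α}

lemma Lp.norm_sq_eq_integral_sq (ψ : Lp ℝ 2 μ) : ‖ψ‖ ^ 2 = ∫ x, ψ x ^ 2 ∂μ := by
  rw [← real_inner_self_eq_norm_sq, L2.inner_def]
  simp [sq]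

lemma MemLp.nemytskii {p : ℝ≥0∞} {f : α → ℝ → ℝ} {a g : α → ℝ} {b : ℝ}
    (hg : MemLp g p μ) (hfm : ∀ t, Measurable fun x => f x t) (hfc : ∀ x, Continuous (f x))
    (ha : MemLp a p μ) (hgrowth : ∀ᵐ x ∂μ, ∀ t, |f x t| ≤ a x + b * |t|) :
    MemLp (fun x => f x (g x)) p μ := by
  have hf : Measurable (Function.uncurry fun t x => f x t) :=
    measurable_uncurry_of_continuous_of_measurable hfc hfm
  refine (ha.add (hg.abs.const_mul b)).of_le
    (hf.comp_aemeasurable (hg.aemeasurable.prodMk aemeasurable_id)).aestronglyMeasurable ?_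
  filter_upwards [hgrowth] with x hx
  rw [Real.norm_eq_abs, Real.norm_eq_abs]
  exact (hx _).trans (le_abs_self _)

end MeasureTheory

section NonResonance

variable {α : Type*} [MeasurableSpace α] {μ : Measure α}
  {Z : Type*} [NormedAddCommGroup Z] [InnerProductSpace ℝ Z]

theorem eq_zero_of_inner_eq_integral_of_slope_mem_Ioo (T : Z →L[ℝ] Lp ℝ 2 μ)
    (hT : Function.Injective T) (V : Submodule ℝ Z) [V.HasOrthogonalProjection] {l L : ℝ}
    (hV : ∀ v ∈ V, ‖v‖ ^ 2 ≤ l * ‖T v‖ ^ 2) (hVperp : ∀ z ∈ Vᗮ, L * ‖T z‖ ^ 2 ≤ ‖z‖ ^ 2)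
    {w : Z} {D : α → ℝ} (hD : MemLp D 2 μ) (hw : ∀ φ, ⟪w, φ⟫ = ∫ x, D x * T φ x ∂μ)
    (hslope : ∀ᵐ x ∂μ, ∃ m ∈ Set.Ioo l L, D x = m * T w x) :
    w = 0 := by
  obtain ⟨v, hv, z, hz, rfl⟩ : ∃ v ∈ V, ∃ z ∈ Vᗮ, w = v + z :=
    ⟨_, V.starProjection_apply_mem w, _, V.sub_starProjection_mem_orthogonal w,
      (add_sub_cancel _ w).symm⟩
  have hinner : ⟪v + z, z - v⟫ = ‖z‖ ^ 2 - ‖v‖ ^ 2 := by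
    rw [inner_add_left, inner_sub_right, inner_sub_right, real_inner_self_eq_norm_sq,
      real_inner_self_eq_norm_sq, real_inner_comm z v]
    ring
  have hTw : ⇑(T (v + z)) =ᵐ[μ] ⇑(T v) + ⇑(T z) := by
    rw [map_add]; exact Lp.coeFn_add _ _
  have hTzv : ⇑(T (z - v)) =ᵐ[μ] ⇑(T z) - ⇑(T v) := by
    rw [map_sub]; exact Lp.coeFn_sub _ _
  have hlhs : Integrable (fun x => D x * T (z - v) x) μ := hD.integrable_mul (Lp.memLp _)
  have hrhs : Integrable (fun x => L * T z x ^ 2 - l * T v x ^ 2) μ :=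
    ((Lp.memLp _).integrable_sq.const_mul _).sub ((Lp.memLp _).integrable_sq.const_mul _)
  have hle : (fun x => D x * T (z - v) x) ≤ᵐ[μ] fun x => L * T z x ^ 2 - l * T v x ^ 2 := by
    filter_upwards [hslope, hTw, hTzv] with x ⟨m, hm, hDx⟩ hwx hzv
    simp only [hDx, hwx, hzv, Pi.add_apply, Pi.sub_apply]
    exact mul_add_mul_sub_le_of_mem_Ioo hm _ _
  have hint_le : ∫ x, L * T z x ^ 2 - l * T v x ^ 2 ∂μ ≤ ∫ x, D x * T (z - v) x ∂μ := by
    rw [integral_sub ((Lp.memLp _).integrable_sq.const_mul _)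
        ((Lp.memLp _).integrable_sq.const_mul _), integral_const_mul, integral_const_mul,
      ← Lp.norm_sq_eq_integral_sq, ← Lp.norm_sq_eq_integral_sq, ← hw, hinner]
    linarith [hV v hv, hVperp z hz]
  have heq := (integral_eq_iff_of_ae_le hlhs hrhs hle).1
    (le_antisymm (integral_mono_ae hlhs hrhs hle) hint_le)
  refine hT ((Lp.eq_zero_iff_ae_eq_zero.2 ?_).trans (map_zero T).symm)
  filter_upwards [heq, hslope, hTw, hTzv] with x hx ⟨m, hm, hDx⟩ hwx hzv
  simp only [hDx, hwx, hzv, Pi.add_apply, Pi.sub_apply] at hx ⊢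
  obtain ⟨hvx, hzx⟩ := eq_zero_of_mul_add_mul_sub_eq hm hx
  simp [hvx, hzx]

end NonResonance

theorem stmt8_general {α : Type*} [MeasurableSpace α] (μ : Measure α)
    {Z : Type*} [NormedAddCommGroup Z] [InnerProductSpace ℝ Z]
    (T : Z →L[ℝ] Lp ℝ 2 μ) (hTinj : Function.Injective T)
    (e : ℕ → Z) (lam : ℕ → ℝ) (k : ℕ)
    (hHk : ∀ u ∈ Submodule.span ℝ (e '' Set.Icc 1 k), ‖u‖^2 ≤ lam k * ‖T u‖^2)
    (hPk : ∀ u ∈ (Submodule.span ℝ (e '' Set.Icc 1 k))ᗮ,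
      lam (k+1) * ‖T u‖^2 ≤ ‖u‖^2)
    (f : α → ℝ → ℝ) (a : α → ℝ) (b : ℝ)
    (hfm : ∀ t : ℝ, Measurable (fun x => f x t)) (hfc : ∀ x, Continuous (f x))
    (ha : MemLp a 2 μ)
    (hgrowth : ∀ᵐ x ∂μ, ∀ t : ℝ, |f x t| ≤ a x + b * |t|)
    (hquot : ∀ᵐ x ∂μ, ∀ s t : ℝ, s ≠ t →
      lam k < (f x s - f x t) / (s - t) ∧
        (f x s - f x t) / (s - t) < lam (k+1)) :
    ∀ u₁ u₂ : Z,
      (∀ φ : Z, ⟪u₁, φ⟫ =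
        ∫ x, f x ((T u₁ : α → ℝ) x) * (T φ : α → ℝ) x ∂μ) →
      (∀ φ : Z, ⟪u₂, φ⟫ =
        ∫ x, f x ((T u₂ : α → ℝ) x) * (T φ : α → ℝ) x ∂μ) →
      u₁ = u₂ := by
  intro u₁ u₂ h₁ h₂
  have hN (u : Z) : MemLp (fun x => f x (T u x)) 2 μ := (Lp.memLp _).nemytskii hfm hfc ha hgrowth
  have hint (u φ : Z) : Integrable (fun x => f x (T u x) * T φ x) μ :=
    (hN u).integrable_mul (Lp.memLp _)
  have : FiniteDimensional ℝ (Submodule.span ℝ (e '' Set.Icc 1 k)) :=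
    FiniteDimensional.span_of_finite ℝ ((Set.finite_Icc 1 k).image e)
  refine sub_eq_zero.1 <| eq_zero_of_inner_eq_integral_of_slope_mem_Ioo T hTinj _ hHk hPk
    ((hN u₁).sub (hN u₂)) (fun φ => ?_) ?_
  · rw [inner_sub_left, h₁, h₂, ← integral_sub (hint u₁ φ) (hint u₂ φ)]
    simp only [Pi.sub_apply, sub_mul]
  · rw [map_sub]
    filter_upwards [hquot, Lp.coeFn_sub (T u₁) (T u₂)] with x hx hsub
    rw [hsub]
    exact exists_mem_Ioo_sub_eq_mul hx _ _

/-- Uniqueness of the weak solution of `⟪u,φ⟫_Z = ∫_Ω f(x,u)φ` when the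
difference quotients of `f` lie strictly between consecutive eigenvalues:
`λ_k < (f(x,s)−f(x,t))/(s−t) < λ_{k+1}` for all `s ≠ t` and a.e. `x`. -/
theorem stmt8 {α : Type*} [MeasurableSpace α] (μ : Measure α)
    {Z : Type*} [NormedAddCommGroup Z] [InnerProductSpace ℝ Z] [CompleteSpace Z]
    (T : Z →L[ℝ] Lp ℝ 2 μ) (hTinj : Function.Injective T)
    (e : ℕ → Z) (lam : ℕ → ℝ) (k : ℕ) (hk : 1 ≤ k)
    (hlampos : 0 < lam k) (hlt : lam k < lam (k+1))
    (hHk : ∀ u ∈ Submodule.span ℝ (e '' Set.Icc 1 k), ‖u‖^2 ≤ lam k * ‖T u‖^2)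
    (hPk : ∀ u ∈ (Submodule.span ℝ (e '' Set.Icc 1 k))ᗮ,
      lam (k+1) * ‖T u‖^2 ≤ ‖u‖^2)
    (f : α → ℝ → ℝ) (a : α → ℝ) (b : ℝ) (hb : 0 ≤ b)
    (hfm : ∀ t : ℝ, Measurable (fun x => f x t)) (hfc : ∀ x, Continuous (f x))
    (ha : MemLp a 2 μ)
    (hgrowth : ∀ᵐ x ∂μ, ∀ t : ℝ, |f x t| ≤ a x + b * |t|)
    (hquot : ∀ᵐ x ∂μ, ∀ s t : ℝ, s ≠ t →
      lam k < (f x s - f x t) / (s - t) ∧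
        (f x s - f x t) / (s - t) < lam (k+1)) :
    ∀ u₁ u₂ : Z,
      (∀ φ : Z, ⟪u₁, φ⟫ =
        ∫ x, f x ((T u₁ : α → ℝ) x) * (T φ : α → ℝ) x ∂μ) →
      (∀ φ : Z, ⟪u₂, φ⟫ =
        ∫ x, f x ((T u₂ : α → ℝ) x) * (T φ : α → ℝ) x ∂μ) →
      u₁ = u₂ :=
  stmt8_general μ T hTinj e lam k hHk hPk f a b hfm hfc ha hgrowth hquot
end

section
/- Let β ∈ L²(Ω) be a weak L²-limit of f(·,u_j)/‖u_j‖_Z where u_j/‖u_j‖_Z → u_0 a.e. in Ω, ‖u_j‖_Z → ∞, and suppose underline-α(x) := liminf_{|t|→∞} f(x,t)/t and ᾱ(x) := limsup_{|t|→∞} f(x,t)/t are finite a.e. Then β(x) = m(x)u_0(x) a.e. for some measurable m with underline-α(x) ≤ m(x) ≤ ᾱ(x) a.e. -/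
/-!
Put `G j x = f x (T u_j x) / ‖u_j‖`. Where `u₀ x ≠ 0` we have `|T u_j x| → ∞`, and
`G j x = (f x t / t) · (t / ‖u_j‖)` with `t = T u_j x`: the first factor is eventually within
any `δ` of `[α̲ x, ᾱ x]` and the second tends to `u₀ x`, so `G j x` is eventually within any `ε`
of the interval between `α̲ x · u₀ x` and `ᾱ x · u₀ x`. Where `u₀ x = 0` the linear growth gives
`G j x → 0`. By the growth bound `(G j)` is bounded in `L²`, hence uniformly integrable on sets of
finite measure, so by Vitali these pointwise bounds pass to `∫ x in s, G j x` and therefore to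
the weak limit `β`. Then `m = β / u₀` works where `u₀ ≠ 0`, and any value in `[α̲, ᾱ]` works
elsewhere.
-/

open MeasureTheory Filter ENNReal Topology Set Bornology

noncomputable def lowerAsymptoticSlope (φ : ℝ → ℝ) : ℝ :=
  liminf (fun t => φ t / t) (cobounded ℝ)

noncomputable def upperAsymptoticSlope (φ : ℝ → ℝ) : ℝ :=
  limsup (fun t => φ t / t) (cobounded ℝ)

theorem mul_mem_Icc_min_max {p lo up c δ : ℝ} (hp : p ∈ Icc (lo - δ) (up + δ)) :
    p * c ∈ Icc (min (lo * c) (up * c) - δ * |c|) (max (lo * c) (up * c) + δ * |c|) := by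
  obtain ⟨hlo, hup⟩ := hp
  rcases le_total 0 c with hc | hc
  · rw [abs_of_nonneg hc]
    constructor
    · nlinarith [min_le_left (lo * c) (up * c)]
    · nlinarith [le_max_right (lo * c) (up * c)]
  · rw [abs_of_nonpos hc]
    constructor
    · nlinarith [min_le_right (lo * c) (up * c)]
    · nlinarith [le_max_left (lo * c) (up * c)]

theorem abs_le_of_mem_Icc_min_max_mul {lo up c y M : ℝ} (hlo : |lo| ≤ M) (hup : |up| ≤ M)
    (hy : y ∈ Icc (min (lo * c) (up * c)) (max (lo * c) (up * c))) : |y| ≤ M * |c| := by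
  have hloc := abs_le.1 ((abs_mul lo c).trans_le (mul_le_mul_of_nonneg_right hlo (abs_nonneg c)))
  have hupc := abs_le.1 ((abs_mul up c).trans_le (mul_le_mul_of_nonneg_right hup (abs_nonneg c)))
  exact abs_le.2 ⟨(le_min hloc.1 hupc.1).trans hy.1, hy.2.trans (max_le hloc.2 hupc.2)⟩

theorem div_mem_Icc_of_mem_Icc_min_max {lo up c y : ℝ} (hc : c ≠ 0) (hlu : lo ≤ up)
    (hy : y ∈ Icc (min (lo * c) (up * c)) (max (lo * c) (up * c))) : y / c ∈ Icc lo up := by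
  obtain ⟨m, hm, rfl⟩ : y ∈ (· * c) '' uIcc lo up := by
    rwa [image_mul_const_uIcc]
  rwa [mul_div_cancel_right₀ _ hc, ← uIcc_of_le hlu]

section LinearGrowth

variable {φ : ℝ → ℝ} {A B : ℝ}

theorem eventually_abs_div_le_of_linear_growth (hφ : ∀ t, |φ t| ≤ A + B * |t|) :
    ∀ᶠ t in cobounded ℝ, |φ t / t| ≤ |B| + 1 := by
  filter_upwards [eventually_cobounded_le_norm (max |A| 1)] with t ht
  rw [Real.norm_eq_abs, max_le_iff] at ht
  rw [abs_div, div_le_iff₀ (by linarith)]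
  nlinarith [hφ t, le_abs_self A, le_abs_self B, abs_nonneg t]

theorem isBoundedUnder_le_div_of_linear_growth (hφ : ∀ t, |φ t| ≤ A + B * |t|) :
    IsBoundedUnder (· ≤ ·) (cobounded ℝ) (fun t => φ t / t) :=
  ⟨|B| + 1, eventually_map.2 <|
    (eventually_abs_div_le_of_linear_growth hφ).mono fun _ ht => (abs_le.1 ht).2⟩

theorem isBoundedUnder_ge_div_of_linear_growth (hφ : ∀ t, |φ t| ≤ A + B * |t|) :
    IsBoundedUnder (· ≥ ·) (cobounded ℝ) (fun t => φ t / t) :=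
  ⟨-(|B| + 1), eventually_map.2 <|
    (eventually_abs_div_le_of_linear_growth hφ).mono fun _ ht => (abs_le.1 ht).1⟩

theorem lowerAsymptoticSlope_le_upperAsymptoticSlope (hφ : ∀ t, |φ t| ≤ A + B * |t|) :
    lowerAsymptoticSlope φ ≤ upperAsymptoticSlope φ :=
  liminf_le_limsup (isBoundedUnder_le_div_of_linear_growth hφ)
    (isBoundedUnder_ge_div_of_linear_growth hφ)

theorem neg_le_lowerAsymptoticSlope (hφ : ∀ t, |φ t| ≤ A + B * |t|) :
    -(|B| + 1) ≤ lowerAsymptoticSlope φ :=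
  le_liminf_of_le (isBoundedUnder_le_div_of_linear_growth hφ).isCoboundedUnder_ge
    ((eventually_abs_div_le_of_linear_growth hφ).mono fun _ ht => (abs_le.1 ht).1)

theorem upperAsymptoticSlope_le (hφ : ∀ t, |φ t| ≤ A + B * |t|) :
    upperAsymptoticSlope φ ≤ |B| + 1 :=
  limsup_le_of_le (isBoundedUnder_ge_div_of_linear_growth hφ).isCoboundedUnder_le
    ((eventually_abs_div_le_of_linear_growth hφ).mono fun _ ht => (abs_le.1 ht).2)

theorem abs_lowerAsymptoticSlope_le (hφ : ∀ t, |φ t| ≤ A + B * |t|) :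
    |lowerAsymptoticSlope φ| ≤ |B| + 1 :=
  abs_le.2 ⟨neg_le_lowerAsymptoticSlope hφ,
    (lowerAsymptoticSlope_le_upperAsymptoticSlope hφ).trans (upperAsymptoticSlope_le hφ)⟩

theorem abs_upperAsymptoticSlope_le (hφ : ∀ t, |φ t| ≤ A + B * |t|) :
    |upperAsymptoticSlope φ| ≤ |B| + 1 :=
  abs_le.2 ⟨(neg_le_lowerAsymptoticSlope hφ).trans
    (lowerAsymptoticSlope_le_upperAsymptoticSlope hφ), upperAsymptoticSlope_le hφ⟩

variable {ι : Type*} {l : Filter ι} {s t : ι → ℝ}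

theorem tendsto_div_of_linear_growth (hφ : ∀ t, |φ t| ≤ A + B * |t|) (hs : Tendsto s l atTop)
    (ht : Tendsto (fun j => t j / s j) l (𝓝 0)) :
    Tendsto (fun j => φ (t j) / s j) l (𝓝 0) := by
  have hbound : Tendsto (fun j => |A| / s j + |B| * |t j / s j|) l (𝓝 0) := by
    simpa using (tendsto_const_nhds.div_atTop hs).add (ht.abs.const_mul |B|)
  refine squeeze_zero_norm' ((hs.eventually_gt_atTop 0).mono fun j hj => ?_) hbound
  calc ‖φ (t j) / s j‖ = |φ (t j)| / s j := by rw [Real.norm_eq_abs, abs_div, abs_of_pos hj]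
    _ ≤ (|A| + |B| * |t j|) / s j := by
        gcongr
        nlinarith [hφ (t j), le_abs_self A, le_abs_self B, abs_nonneg (t j)]
    _ = |A| / s j + |B| * |t j / s j| := by rw [abs_div, abs_of_pos hj]; ring

theorem eventually_div_mem_Icc_of_linear_growth (hφ : ∀ t, |φ t| ≤ A + B * |t|)
    (hs : Tendsto s l atTop) {c : ℝ} (ht : Tendsto (fun j => t j / s j) l (𝓝 c))
    {ε : ℝ} (hε : 0 < ε) :
    ∀ᶠ j in l, φ (t j) / s j ∈
      Icc (min (lowerAsymptoticSlope φ * c) (upperAsymptoticSlope φ * c) - ε)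
        (max (lowerAsymptoticSlope φ * c) (upperAsymptoticSlope φ * c) + ε) := by
  rcases eq_or_ne c 0 with rfl | hc
  · simpa using (tendsto_div_of_linear_growth hφ hs ht).eventually
      (Icc_mem_nhds (neg_lt_zero.2 hε) hε)
  have ht_cob : Tendsto t l (cobounded ℝ) := by
    rw [← tendsto_norm_atTop_iff_cobounded]
    refine (ht.norm.pos_mul_atTop (norm_pos_iff.2 hc) hs).congr'
      ((hs.eventually_gt_atTop 0).mono fun j hj => ?_)
    rw [norm_div, Real.norm_of_nonneg hj.le, div_mul_cancel₀ _ hj.ne']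
  set δ := ε / (2 * |c|)
  have hδ : 0 < δ := by positivity
  have hδc : δ * |c| = ε / 2 := by
    have := abs_ne_zero.2 hc
    show ε / (2 * |c|) * |c| = ε / 2
    field_simp
  have hslope : ∀ᶠ x in cobounded ℝ, φ x / x ∈
      Icc (lowerAsymptoticSlope φ - δ) (upperAsymptoticSlope φ + δ) :=
    ((eventually_lt_of_lt_liminf (sub_lt_self _ hδ)
      (isBoundedUnder_ge_div_of_linear_growth hφ)).and
      (eventually_lt_of_limsup_lt (lt_add_of_pos_right _ hδ)
      (isBoundedUnder_le_div_of_linear_growth hφ))).mono fun _ h => ⟨h.1.le, h.2.le⟩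
  have herr : Tendsto (fun j => φ (t j) / t j * (t j / s j - c)) l (𝓝 0) :=
    isBoundedUnder_le_mul_tendsto_zero ⟨|B| + 1, eventually_map.2 <|
      ht_cob.eventually (eventually_abs_div_le_of_linear_growth hφ)⟩
      (by simpa using ht.sub_const c)
  filter_upwards [ht_cob.eventually hslope,
    herr.eventually (Ioo_mem_nhds (neg_lt_zero.2 (half_pos hε)) (half_pos hε)),
    ht_cob.eventually_ne_cobounded 0] with j hj herr hj0
  have hsplit : φ (t j) / s j = φ (t j) / t j * c + φ (t j) / t j * (t j / s j - c) := by
    rw [← mul_add, add_sub_cancel, div_mul_div_cancel₀ hj0]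
  have hmain := mul_mem_Icc_min_max (c := c) hj
  rw [hδc] at hmain
  rw [hsplit]
  constructor <;> linarith [hmain.1, hmain.2, herr.1, herr.2]

end LinearGrowth

namespace MeasureTheory

variable {α : Type*} [MeasurableSpace α] {μ : Measure α}

theorem unifIntegrable_of_eLpNorm_le {ι : Type*} {f : ι → α → ℝ} {p q : ℝ≥0∞}
    (hp : p ≠ 0) (hpq : p < q) (hq : q ≠ ∞) (hf : ∀ i, AEStronglyMeasurable (f i) μ)
    {C : ℝ≥0∞} (hC : C ≠ ∞) (hfC : ∀ i, eLpNorm (f i) q μ ≤ C) : UnifIntegrable f p μ := by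
  set r := 1 / p.toReal - 1 / q.toReal
  have hr : 0 < r := by
    have hp' : 0 < p.toReal := ENNReal.toReal_pos hp (hpq.trans_le le_top).ne
    have := (ENNReal.toReal_lt_toReal (hpq.trans_le le_top).ne hq).2 hpq
    simp only [r, sub_pos]
    gcongr
  have hlim : Tendsto (fun δ : ℝ => C * ENNReal.ofReal δ ^ r) (𝓝 0) (𝓝 0) := by
    have h : Tendsto (fun δ : ℝ => ENNReal.ofReal δ ^ r) (𝓝 0) (𝓝 (ENNReal.ofReal 0 ^ r)) :=
      (ENNReal.continuous_rpow_const.comp ENNReal.continuous_ofReal).tendsto 0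
    simpa [ENNReal.zero_rpow_of_pos hr] using ENNReal.Tendsto.const_mul h (Or.inr hC)
  intro ε hε
  obtain ⟨δ, hδC, hδ⟩ := (((hlim.eventually (gt_mem_nhds (ENNReal.ofReal_pos.2 hε))).filter_mono
    nhdsWithin_le_nhds).and (self_mem_nhdsWithin (s := Ioi 0))).exists
  refine ⟨δ, hδ, fun i s hs hμs => ?_⟩
  rw [eLpNorm_indicator_eq_eLpNorm_restrict hs]
  calc eLpNorm (f i) p (μ.restrict s)
      ≤ eLpNorm (f i) q (μ.restrict s) * μ.restrict s univ ^ r :=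
        eLpNorm_le_eLpNorm_mul_rpow_measure_univ hpq.le (hf i).restrict
    _ ≤ C * ENNReal.ofReal δ ^ r := by
        rw [Measure.restrict_apply_univ]
        gcongr
        exact (eLpNorm_mono_measure _ Measure.restrict_le_self).trans (hfC i)
    _ ≤ ENNReal.ofReal ε := hδC.le

theorem tendsto_setIntegral_zero_of_tendsto_ae {f : ℕ → α → ℝ} {q : ℝ≥0∞} (hq : 1 < q)
    (hq' : q ≠ ∞) (hf : ∀ n, AEStronglyMeasurable (f n) μ) {C : ℝ≥0∞} (hC : C ≠ ∞)
    (hfC : ∀ᶠ n in atTop, eLpNorm (f n) q μ ≤ C) {s : Set α} (hs : μ s ≠ ∞)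
    (hlim : ∀ᵐ x ∂μ, Tendsto (f · x) atTop (𝓝 0)) :
    Tendsto (fun n => ∫ x in s, f n x ∂μ) atTop (𝓝 0) := by
  obtain ⟨N, hN⟩ := hfC.exists_forall_of_atTop
  have : Fact (μ s < ∞) := ⟨hs.lt_top⟩
  have hbound : ∀ n, eLpNorm (f (n + N)) q (μ.restrict s) ≤ C := fun n =>
    (eLpNorm_mono_measure _ Measure.restrict_le_self).trans (hN _ le_add_self)
  have hui : UnifIntegrable (fun n => f (n + N)) 1 (μ.restrict s) :=
    unifIntegrable_of_eLpNorm_le one_ne_zero hq hq' (fun n => (hf _).restrict) hC hbound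
  have hL1 := tendsto_Lp_finite_of_tendsto_ae le_rfl one_ne_top (fun n => (hf _).restrict)
    MemLp.zero hui (ae_restrict_of_ae (hlim.mono fun x hx => hx.comp (tendsto_add_atTop_nat N)))
  have hint : ∀ n, Integrable (f (n + N)) (μ.restrict s) := fun n =>
    MemLp.integrable hq.le ⟨(hf _).restrict, (hbound n).trans_lt hC.lt_top⟩
  rw [← tendsto_add_atTop_iff_nat N]
  simpa using tendsto_integral_of_L1' 0 aestronglyMeasurable_zero (Eventually.of_forall hint)
    (by simpa using hL1)

theorem MemLp.integrableOn_of_measure_lt_top {g : α → ℝ} {q : ℝ≥0∞} (hq : 1 ≤ q)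
    (hg : MemLp g q μ) {s : Set α} (hs : μ s < ∞) : IntegrableOn g s μ :=
  have : Fact (μ s < ∞) := ⟨hs⟩
  (hg.restrict s).integrable hq

theorem le_setIntegral_of_tendsto {G : ℕ → α → ℝ} {U : α → ℝ} {q : ℝ≥0∞} (hq : 1 < q)
    (hq' : q ≠ ∞) (hG : ∀ n, AEStronglyMeasurable (G n) μ) {C : ℝ≥0∞} (hC : C ≠ ∞)
    (hGC : ∀ᶠ n in atTop, eLpNorm (G n) q μ ≤ C) (hU : MemLp U q μ)
    (hGU : ∀ᵐ x ∂μ, ∀ ε > 0, ∀ᶠ n in atTop, G n x ≤ U x + ε) {s : Set α} (hs : μ s < ∞)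
    {b : ℝ} (hGb : Tendsto (fun n => ∫ x in s, G n x ∂μ) atTop (𝓝 b)) :
    b ≤ ∫ x in s, U x ∂μ := by
  -- `h n = (G n - U)⁺` tends to `0` a.e. and is bounded in `Lᵠ`, so by Vitali `∫ x in s, h n → 0`.
  set h : ℕ → α → ℝ := fun n x => max (G n x - U x) 0
  have hh_meas : ∀ n, AEStronglyMeasurable (h n) μ := fun n =>
    ((hG n).sub hU.1).sup aestronglyMeasurable_const
  have hh_lim : ∀ᵐ x ∂μ, Tendsto (h · x) atTop (𝓝 0) := by
    filter_upwards [hGU] with x hx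
    refine tendsto_order.2 ⟨fun c hc => Eventually.of_forall fun n => hc.trans_le
      (le_max_right _ _), fun c hc => (hx (c / 2) (half_pos hc)).mono fun n hn => ?_⟩
    exact max_lt (by linarith) hc
  have hhC : ∀ᶠ n in atTop, eLpNorm (h n) q μ ≤ C + eLpNorm U q μ := by
    filter_upwards [hGC] with n hn
    calc eLpNorm (h n) q μ ≤ eLpNorm (G n - U) q μ := eLpNorm_mono fun x => by
          rw [Real.norm_eq_abs, Real.norm_eq_abs, abs_of_nonneg (le_max_right _ _)]
          exact max_le (le_abs_self _) (abs_nonneg _)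
      _ ≤ eLpNorm (G n) q μ + eLpNorm U q μ := eLpNorm_sub_le (hG n) hU.1 hq.le
      _ ≤ C + eLpNorm U q μ := by gcongr
  have hh_int := tendsto_setIntegral_zero_of_tendsto_ae hq hq' hh_meas
    (ENNReal.add_ne_top.2 ⟨hC, hU.2.ne⟩) hhC hs.ne hh_lim
  refine le_of_tendsto_of_tendsto hGb (by simpa using hh_int.const_add _) ?_
  filter_upwards [hGC, hhC] with n hGn hhn
  have hUs := hU.integrableOn_of_measure_lt_top hq.le hs
  have hhs := MemLp.integrableOn_of_measure_lt_top hq.le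
    ⟨hh_meas n, hhn.trans_lt (by finiteness)⟩ hs
  rw [← integral_add hUs hhs]
  refine setIntegral_mono (MemLp.integrableOn_of_measure_lt_top hq.le
    ⟨hG n, hGn.trans_lt hC.lt_top⟩ hs) (hUs.add hhs) fun x => ?_
  have : G n x - U x ≤ h n x := le_max_left _ _
  linarith

theorem ae_le_of_tendsto_setIntegral {G : ℕ → α → ℝ} {B U : α → ℝ} {q : ℝ≥0∞} (hq : 1 < q)
    (hq' : q ≠ ∞) (hG : ∀ n, AEStronglyMeasurable (G n) μ) {C : ℝ≥0∞} (hC : C ≠ ∞)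
    (hGC : ∀ᶠ n in atTop, eLpNorm (G n) q μ ≤ C) (hB : MemLp B q μ) (hU : MemLp U q μ)
    (hGU : ∀ᵐ x ∂μ, ∀ ε > 0, ∀ᶠ n in atTop, G n x ≤ U x + ε)
    (hGB : ∀ s, MeasurableSet s → μ s < ∞ →
      Tendsto (fun n => ∫ x in s, G n x ∂μ) atTop (𝓝 (∫ x in s, B x ∂μ))) :
    B ≤ᵐ[μ] U := by
  rw [← eventually_sub_nonneg]
  have hUB := hU.sub hB
  refine (hUB.aefinStronglyMeasurable (by positivity) hq').ae_nonneg_of_forall_setIntegral_nonneg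
    (fun s _ hμs => hUB.integrableOn_of_measure_lt_top hq.le hμs) fun s hs hμs => ?_
  simp only [Pi.sub_apply]
  rw [integral_sub (hU.integrableOn_of_measure_lt_top hq.le hμs)
    (hB.integrableOn_of_measure_lt_top hq.le hμs), sub_nonneg]
  exact le_setIntegral_of_tendsto hq hq' hG hC hGC hU hGU hμs (hGB s hs hμs)

theorem MemLp.of_mem_Icc_min_max_mul {lo up c g : α → ℝ} {q : ℝ≥0∞} (hc : MemLp c q μ)
    (hg : AEStronglyMeasurable g μ) {M : ℝ} (hM : ∀ᵐ x ∂μ, |lo x| ≤ M ∧ |up x| ≤ M)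
    (hgc : ∀ᵐ x ∂μ, g x ∈ Icc (min (lo x * c x) (up x * c x)) (max (lo x * c x) (up x * c x))) :
    MemLp g q μ := by
  refine MemLp.of_le (hc.const_mul M) hg ?_
  filter_upwards [hM, hgc] with x hx hgx
  rw [Real.norm_eq_abs, Real.norm_eq_abs, abs_mul]
  exact (abs_le_of_mem_Icc_min_max_mul hx.1 hx.2 hgx).trans
    (mul_le_mul_of_nonneg_right (le_abs_self M) (abs_nonneg _))

theorem ae_mem_Icc_min_max_mul_of_tendsto_setIntegral {G : ℕ → α → ℝ} {B lo up c : α → ℝ}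
    {q : ℝ≥0∞} (hq : 1 < q) (hq' : q ≠ ∞) (hG : ∀ n, AEStronglyMeasurable (G n) μ)
    {C : ℝ≥0∞} (hC : C ≠ ∞) (hGC : ∀ᶠ n in atTop, eLpNorm (G n) q μ ≤ C) (hB : MemLp B q μ)
    (hc : MemLp c q μ) (hlo : AEStronglyMeasurable lo μ) (hup : AEStronglyMeasurable up μ)
    {M : ℝ} (hM : ∀ᵐ x ∂μ, |lo x| ≤ M ∧ |up x| ≤ M)
    (hGc : ∀ᵐ x ∂μ, ∀ ε > 0, ∀ᶠ n in atTop, G n x ∈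
      Icc (min (lo x * c x) (up x * c x) - ε) (max (lo x * c x) (up x * c x) + ε))
    (hGB : ∀ s, MeasurableSet s → μ s < ∞ →
      Tendsto (fun n => ∫ x in s, G n x ∂μ) atTop (𝓝 (∫ x in s, B x ∂μ))) :
    ∀ᵐ x ∂μ, B x ∈ Icc (min (lo x * c x) (up x * c x)) (max (lo x * c x) (up x * c x)) := by
  have hL : MemLp (fun x => min (lo x * c x) (up x * c x)) q μ :=
    hc.of_mem_Icc_min_max_mul ((hlo.mul hc.1).inf (hup.mul hc.1)) hM
      (Eventually.of_forall fun _ => ⟨le_rfl, min_le_max⟩)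
  have hU : MemLp (fun x => max (lo x * c x) (up x * c x)) q μ :=
    hc.of_mem_Icc_min_max_mul ((hlo.mul hc.1).sup (hup.mul hc.1)) hM
      (Eventually.of_forall fun _ => ⟨min_le_max, le_rfl⟩)
  have hupper := ae_le_of_tendsto_setIntegral hq hq' hG hC hGC hB hU
    (hGc.mono fun x hx ε hε => (hx ε hε).mono fun _ h => h.2) hGB
  have hlower := ae_le_of_tendsto_setIntegral (G := fun n x => -G n x) (B := fun x => -B x)
    (U := fun x => -min (lo x * c x) (up x * c x)) hq hq' (fun n => (hG n).neg) hC
    (hGC.mono fun n hn => (eLpNorm_neg (G n) q μ).trans_le hn) hB.neg hL.neg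
    (hGc.mono fun x hx ε hε => (hx ε hε).mono fun _ h => by linarith [h.1])
    fun s hs hμs => by simpa only [integral_neg] using (hGB s hs hμs).neg
  filter_upwards [hupper, hlower] with x hxU hxL
  exact ⟨neg_le_neg_iff.1 hxL, hxU⟩

theorem integral_mul_indicatorConstLp_one {p : ℝ≥0∞} {s : Set α} (hs : MeasurableSet s)
    (hμs : μ s ≠ ∞) (F : α → ℝ) :
    ∫ x, F x * (indicatorConstLp p hs hμs (1 : ℝ) : α → ℝ) x ∂μ = ∫ x in s, F x ∂μ := by
  rw [← integral_indicator hs]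
  refine integral_congr_ae ((indicatorConstLp_coeFn (p := p) (hs := hs) (hμs := hμs)
    (c := (1 : ℝ))).mono fun x hx => ?_)
  by_cases hxs : x ∈ s <;> simp [hx, hxs]

theorem exists_measurable_eq_mul_of_ae_mem_Icc {lo up c y : α → ℝ} (hlo : Measurable lo)
    (hc : Measurable c) (hy : Measurable y) (hlu : ∀ᵐ x ∂μ, lo x ≤ up x)
    (hyc : ∀ᵐ x ∂μ, y x ∈ Icc (min (lo x * c x) (up x * c x)) (max (lo x * c x) (up x * c x))) :
    ∃ m : α → ℝ, Measurable m ∧ (∀ᵐ x ∂μ, lo x ≤ m x ∧ m x ≤ up x) ∧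
      ∀ᵐ x ∂μ, y x = m x * c x := by
  classical
  refine ⟨fun x => if c x = 0 then lo x else y x / c x,
    Measurable.ite (hc (measurableSet_singleton 0)) hlo (hy.div hc), ?_, ?_⟩
  · filter_upwards [hlu, hyc] with x hx hxy
    split_ifs with hcx
    · exact ⟨le_rfl, hx⟩
    · exact div_mem_Icc_of_mem_Icc_min_max hcx hx hxy
  · filter_upwards [hyc] with x hxy
    split_ifs with hcx
    · simpa [hcx] using hxy
    · exact (div_mul_cancel₀ _ hcx).symm

end MeasureTheory

section Superposition

variable {α : Type*} [MeasurableSpace α] {μ : Measure α}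

theorem measurable_superposition {f : α → ℝ → ℝ} (hfm : ∀ t, Measurable (f · t))
    (hfc : ∀ x, Continuous (f x)) {w : α → ℝ} (hw : Measurable w) :
    Measurable fun x => f x (w x) :=
  (measurable_uncurry_of_continuous_of_measurable (u := fun t x => f x t) hfc hfm).comp
    (hw.prodMk measurable_id)

theorem eLpNorm_superposition_div_le {f : α → ℝ → ℝ} {a : α → ℝ} {b : ℝ} {p : ℝ≥0∞}
    (hp : 1 ≤ p) (ha : AEStronglyMeasurable a μ)
    (hgrowth : ∀ᵐ x ∂μ, ∀ t, |f x t| ≤ a x + b * |t|) {w : α → ℝ}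
    (hw : AEStronglyMeasurable w μ) {s : ℝ} (hs : 1 ≤ s) :
    eLpNorm (fun x => f x (w x) / s) p μ ≤
      eLpNorm a p μ + ‖b‖ₑ * eLpNorm (fun x => w x / s) p μ := by
  have hpointwise : ∀ᵐ x ∂μ, ‖f x (w x) / s‖ ≤ ‖‖a x‖ + ‖b‖ * ‖w x / s‖‖ := by
    filter_upwards [hgrowth] with x hx
    have hs0 : 0 < s := zero_lt_one.trans_le hs
    rw [Real.norm_of_nonneg (add_nonneg (norm_nonneg (a x))
        (mul_nonneg (norm_nonneg b) (norm_nonneg _))), norm_div, norm_div,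
      Real.norm_of_nonneg hs0.le, div_le_iff₀ hs0, add_mul, mul_assoc, div_mul_cancel₀ _ hs0.ne']
    simp only [Real.norm_eq_abs]
    nlinarith [hx (w x), le_abs_self (a x), le_abs_self b, abs_nonneg (w x), abs_nonneg (a x)]
  calc eLpNorm (fun x => f x (w x) / s) p μ
      ≤ eLpNorm (fun x => ‖a x‖ + ‖b‖ * ‖w x / s‖) p μ := eLpNorm_mono_ae hpointwise
    _ ≤ eLpNorm (fun x => ‖a x‖) p μ + eLpNorm (fun x => ‖b‖ * ‖w x / s‖) p μ :=
        eLpNorm_add_le ha.norm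
          ((hw.aemeasurable.div_const s).aestronglyMeasurable.norm.const_mul _) hp
    _ = eLpNorm a p μ + ‖b‖ₑ * eLpNorm (fun x => w x / s) p μ := by
        rw [eLpNorm_norm, show (fun x => ‖b‖ * ‖w x / s‖) = ‖b‖ • fun x => ‖w x / s‖ from rfl,
          eLpNorm_const_smul, eLpNorm_norm, enorm_norm]

variable {Z : Type*} [NormedAddCommGroup Z] [NormedSpace ℝ Z] {p : ℝ≥0∞} [Fact (1 ≤ p)]

theorem eLpNorm_div_norm_le_opNorm (T : Z →L[ℝ] Lp ℝ p μ) (z : Z) :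
    eLpNorm (fun x => T z x / ‖z‖) p μ ≤ ENNReal.ofReal ‖T‖ := by
  have hsmul : (fun x => T z x / ‖z‖) = ‖z‖⁻¹ • ⇑(T z) := by
    ext x
    simp [div_eq_inv_mul]
  rw [hsmul, eLpNorm_const_smul, ← Lp.enorm_def, ← ofReal_norm, ← ofReal_norm,
    ← ENNReal.ofReal_mul (norm_nonneg _)]
  refine ENNReal.ofReal_le_ofReal ?_
  simpa [div_eq_inv_mul] using T.ratio_le_opNorm z

theorem memLp_of_ae_tendsto_div_norm (T : Z →L[ℝ] Lp ℝ p μ) {u : ℕ → Z} {u₀ : α → ℝ}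
    (hu₀ : AEStronglyMeasurable u₀ μ)
    (hae : ∀ᵐ x ∂μ, Tendsto (fun j => T (u j) x / ‖u j‖) atTop (𝓝 (u₀ x))) :
    MemLp u₀ p μ :=
  ⟨hu₀, (Lp.eLpNorm_le_of_ae_tendsto
    (Eventually.of_forall fun j => eLpNorm_div_norm_le_opNorm T (u j))
    (fun j => ((Lp.stronglyMeasurable (T (u j))).measurable.div_const _).aestronglyMeasurable)
    hae).trans_lt ofReal_lt_top⟩

end Superposition

theorem stmt15_general {α : Type*} [MeasurableSpace α] (μ : Measure α)
    {Z : Type*} [NormedAddCommGroup Z] [InnerProductSpace ℝ Z]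
    (T : Z →L[ℝ] Lp ℝ 2 μ)
    (f : α → ℝ → ℝ) (a : α → ℝ) (b : ℝ)
    (hfm : ∀ t : ℝ, Measurable (fun x => f x t)) (hfc : ∀ x, Continuous (f x))
    (ha : MemLp a 2 μ)
    (hgrowth : ∀ᵐ x ∂μ, ∀ t : ℝ, |f x t| ≤ a x + b * |t|)
    (u : ℕ → Z) (hnorm : Tendsto (fun j => ‖u j‖) atTop atTop)
    (u₀ : α → ℝ) (hu₀m : Measurable u₀)
    (hae : ∀ᵐ x ∂μ, Tendsto (fun j => (T (u j) : α → ℝ) x / ‖u j‖) atTop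
      (nhds (u₀ x)))
    (alow aup : α → ℝ) (halowm : Measurable alow) (haupm : Measurable aup)
    (halow : ∀ᵐ x ∂μ,
      alow x = liminf (fun t : ℝ => f x t / t) (Bornology.cobounded ℝ))
    (haup : ∀ᵐ x ∂μ,
      aup x = limsup (fun t : ℝ => f x t / t) (Bornology.cobounded ℝ))
    (β : Lp ℝ 2 μ)
    (hweak : ∀ g : Lp ℝ 2 μ,
      Tendsto
        (fun j => ∫ x, (f x ((T (u j) : α → ℝ) x) / ‖u j‖) * (g : α → ℝ) x ∂μ)
        atTop (nhds (∫ x, (β : α → ℝ) x * (g : α → ℝ) x ∂μ))) :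
    ∃ m : α → ℝ, Measurable m ∧
      (∀ᵐ x ∂μ, alow x ≤ m x ∧ m x ≤ aup x) ∧
      (∀ᵐ x ∂μ, (β : α → ℝ) x = m x * u₀ x) := by
  have hTu : ∀ j, Measurable (T (u j) : α → ℝ) := fun j => (Lp.stronglyMeasurable _).measurable
  set G : ℕ → α → ℝ := fun j x => f x (T (u j) x) / ‖u j‖
  have hG : ∀ j, AEStronglyMeasurable (G j) μ := fun j =>
    ((measurable_superposition hfm hfc (hTu j)).div_const _).aestronglyMeasurable
  have hGC : ∀ᶠ j in atTop, eLpNorm (G j) 2 μ ≤ eLpNorm a 2 μ + ‖b‖ₑ * ENNReal.ofReal ‖T‖ :=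
    (hnorm.eventually_ge_atTop 1).mono fun j hj =>
      (eLpNorm_superposition_div_le one_le_two ha.1 hgrowth (hTu j).aestronglyMeasurable hj).trans
        (by gcongr; exact eLpNorm_div_norm_le_opNorm T (u j))
  have hslope : ∀ᵐ x ∂μ, alow x ≤ aup x ∧ |alow x| ≤ |b| + 1 ∧ |aup x| ≤ |b| + 1 := by
    filter_upwards [hgrowth, halow, haup] with x hx hlo hup
    rw [hlo, hup]
    exact ⟨lowerAsymptoticSlope_le_upperAsymptoticSlope hx, abs_lowerAsymptoticSlope_le hx,
      abs_upperAsymptoticSlope_le hx⟩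
  have hpinch : ∀ᵐ x ∂μ, ∀ ε > 0, ∀ᶠ j in atTop, G j x ∈
      Icc (min (alow x * u₀ x) (aup x * u₀ x) - ε) (max (alow x * u₀ x) (aup x * u₀ x) + ε) := by
    filter_upwards [hgrowth, hae, halow, haup] with x hx hxu hlo hup ε hε
    rw [hlo, hup]
    exact eventually_div_mem_Icc_of_linear_growth hx hnorm hxu hε
  have hGβ : ∀ s, MeasurableSet s → μ s < ∞ →
      Tendsto (fun j => ∫ x in s, G j x ∂μ) atTop (𝓝 (∫ x in s, β x ∂μ)) := fun s hs hμs => by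
    simpa only [integral_mul_indicatorConstLp_one] using hweak (indicatorConstLp 2 hs hμs.ne 1)
  have hβ := ae_mem_Icc_min_max_mul_of_tendsto_setIntegral one_lt_two ofNat_ne_top hG
    (by finiteness) hGC (Lp.memLp β) (memLp_of_ae_tendsto_div_norm T hu₀m.aestronglyMeasurable hae)
    halowm.aestronglyMeasurable haupm.aestronglyMeasurable (hslope.mono fun x hx => hx.2) hpinch hGβ
  exact exists_measurable_eq_mul_of_ae_mem_Icc halowm hu₀m (Lp.stronglyMeasurable β).measurable
    (hslope.mono fun x hx => hx.1) hβ

/-- Identification of the weak limit: if `f(·,u_j)/‖u_j‖_Z ⇀ β` in `L²`,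
`u_j/‖u_j‖_Z → u₀` a.e., `‖u_j‖_Z → ∞`, and the asymptotic slopes
`α̲(x) = liminf_{|t|→∞} f(x,t)/t` and `ᾱ(x) = limsup_{|t|→∞} f(x,t)/t` are
finite a.e., then `β = m·u₀` a.e. for some measurable `m` with
`α̲ ≤ m ≤ ᾱ` a.e. -/
theorem stmt15 {α : Type*} [MeasurableSpace α] (μ : Measure α)
    {Z : Type*} [NormedAddCommGroup Z] [InnerProductSpace ℝ Z] [CompleteSpace Z]
    (T : Z →L[ℝ] Lp ℝ 2 μ)
    (f : α → ℝ → ℝ) (a : α → ℝ) (b : ℝ) (hb : 0 ≤ b)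
    (hfm : ∀ t : ℝ, Measurable (fun x => f x t)) (hfc : ∀ x, Continuous (f x))
    (ha : MemLp a 2 μ)
    (hgrowth : ∀ᵐ x ∂μ, ∀ t : ℝ, |f x t| ≤ a x + b * |t|)
    (u : ℕ → Z) (hnorm : Tendsto (fun j => ‖u j‖) atTop atTop)
    (u₀ : α → ℝ) (hu₀m : Measurable u₀)
    (hae : ∀ᵐ x ∂μ, Tendsto (fun j => (T (u j) : α → ℝ) x / ‖u j‖) atTop
      (nhds (u₀ x)))
    (alow aup : α → ℝ) (halowm : Measurable alow) (haupm : Measurable aup)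
    (halow : ∀ᵐ x ∂μ,
      alow x = liminf (fun t : ℝ => f x t / t) (Bornology.cobounded ℝ))
    (haup : ∀ᵐ x ∂μ,
      aup x = limsup (fun t : ℝ => f x t / t) (Bornology.cobounded ℝ))
    (β : Lp ℝ 2 μ)
    (hweak : ∀ g : Lp ℝ 2 μ,
      Tendsto
        (fun j => ∫ x, (f x ((T (u j) : α → ℝ) x) / ‖u j‖) * (g : α → ℝ) x ∂μ)
        atTop (nhds (∫ x, (β : α → ℝ) x * (g : α → ℝ) x ∂μ))) :
    ∃ m : α → ℝ, Measurable m ∧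
      (∀ᵐ x ∂μ, alow x ≤ m x ∧ m x ≤ aup x) ∧
      (∀ᵐ x ∂μ, (β : α → ℝ) x = m x * u₀ x) :=
  stmt15_general μ T f a b hfm hfc ha hgrowth u hnorm u₀ hu₀m hae alow aup halowm haupm halow haup β
    hweak
end
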